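/- arXiv:2604.21299 — 6 statements merged into one kernel-verified Lean document; each statement's English description precedes it below -/
import Mathlib

section
/- For every real number M > 0 there exist a time T* = T*(M) > 0 and a continuously differentiable function x : [0, T*) → (0, ∞) such that: (i) x(0) = M; (ii) x'(t) ≤ x(t) + x(t)² · exp(∫₀ᵗ x(s) ds) for all t ∈ [0, T*); (iii) limsup_{t → T*⁻} x(t) = ∞; and (iv) there exists a sequence t_n → T*⁻ with x(t_n) = M/(n+1) for every n ∈ ℕ. -/
/-
Take `x = φ' (1 - sin φ) + ε (δ - t)` with phase `φ t = (t / (δ - t)) ^ 2`, which blows up at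
`T = δ`. Since `φ' (1 - sin φ) = (φ + cos φ)'`, the integral `∫₀ᵗ x` is at least `φ - 2`, so the
factor `exp (∫₀ᵗ x)` grows like `exp ((δ - t)⁻²)` and beats every power of `(δ - t)⁻¹` occurring in
`x'`: the cross terms of `x² exp (∫₀ᵗ x)` absorb `x'`, the `cos φ`-term after an AM-GM step. At the
phases `π/2 + 2πk` the solution sits on its floor `εδ / (1 + √φ) → 0`, at the phases `3π/2 + 2πk`
it exceeds `2φ' → ∞`, and the intermediate value theorem produces the times `tₙ`.
-/

open Set Filter Real Topology

lemma exp_two_le_eight : exp 2 ≤ 8 := by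
  have h := exp_one_lt_d9
  have h2 : exp 2 = exp 1 ^ 2 := by rw [← exp_nat_mul]; norm_num
  nlinarith [exp_pos 1]

lemma one_add_pow_six_le_exp {r : ℝ} (hr : 0 ≤ r) : (1 + r) ^ 6 ≤ 1792 * exp (r ^ 2 - 2) := by
  have hsplit : (1 + r) ^ 6 ≤ 32 * (1 + r ^ 6) := by
    simpa [show (2:ℝ) ^ 5 = 32 by norm_num] using add_pow_le zero_le_one hr 6
  have hA_cube : r ^ 6 ≤ 6 * exp (r ^ 2) := by
    have := pow_div_factorial_le_exp (r ^ 2) (sq_nonneg r) 3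
    rw [← pow_mul] at this
    norm_num [Nat.factorial] at this
    linarith
  have hone : 1 ≤ exp (r ^ 2) := one_le_exp (sq_nonneg r)
  have hshift : exp (r ^ 2) ≤ 8 * exp (r ^ 2 - 2) := by
    rw [show r ^ 2 = (r ^ 2 - 2) + 2 by ring, exp_add, sub_add_cancel]
    nlinarith [exp_two_le_eight, exp_pos (r ^ 2 - 2)]
  linarith

lemma pow_le_mul_pow_of_pow_le_mul_pow {s δ C : ℝ} {k n : ℕ} (hs : 0 < s) (hsδ : s ≤ δ)
    (h : δ ^ n ≤ C * s ^ n) (hk : k ≤ n) : δ ^ k ≤ C * s ^ k := by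
  have hδ : 0 < δ := hs.trans_le hsδ
  have hC : 0 ≤ C := by
    by_contra! hC; nlinarith [pow_pos hs n, pow_pos hδ n]
  refine le_of_mul_le_mul_right ?_ (pow_pos hδ (n - k))
  calc δ ^ k * δ ^ (n - k) = δ ^ n := by rw [← pow_add, Nat.add_sub_cancel' hk]
    _ ≤ C * s ^ n := h
    _ = C * s ^ k * s ^ (n - k) := by rw [mul_assoc, ← pow_add, Nat.add_sub_cancel' hk]
    _ ≤ C * s ^ k * δ ^ (n - k) := by gcongr

lemma sq_mul_le_of_pow_three_le {A Q u v : ℝ} (hA : 0 ≤ A) (hu : 0 < u)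
    (h : A ^ 3 ≤ u * v) : A ^ 2 * Q ≤ u * A * Q ^ 2 / 2 + v / 2 := by
  refine le_of_mul_le_mul_left ?_ (by positivity : 0 < 2 * u)
  nlinarith [mul_nonneg hA (sq_nonneg (u * Q - A))]

/- The differential inequality in the variables `s = δ - t`, `A = φ'`, `P = 1 - sin φ`,
`Q = -cos φ` and `E = exp (∫₀ᵗ x)`; `hgrowth` is where `E ≥ exp (φ - 2)` enters. -/
lemma deriv_le_sq_mul_of_growth {δ s ε A P Q E : ℝ} (hs : 0 < s) (hsδ : s ≤ δ) (hε : 0 < ε)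
    (hE : 0 < E) (hA : 0 ≤ A) (hAs : A * s ^ 3 ≤ 2 * δ ^ 2) (hP : 0 ≤ P) (hP2 : P ≤ 2)
    (hQ : Q ^ 2 ≤ 2 * P) (hgrowth : δ ^ 6 ≤ 1792 * E * s ^ 6) (hεδ : 10000 ≤ ε * δ ^ 2) :
    (2 * δ / s ^ 3 + 3 * A / s) * P + A ^ 2 * Q ≤ (A * P + ε * s) ^ 2 * E := by
  have hδ : 0 < δ := hs.trans_le hsδ
  have hAP : 0 ≤ A * P := mul_nonneg hA hP
  have hE_s2 : 3 ≤ E * ε * s ^ 2 := by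
    have := pow_le_mul_pow_of_pow_le_mul_pow (k := 2) hs hsδ hgrowth (by norm_num)
    nlinarith [mul_le_mul_of_nonneg_left this hε.le]
  have hE_s5 : 8 * δ ≤ E * ε ^ 2 * s ^ 5 := by
    have := pow_le_mul_pow_of_pow_le_mul_pow (k := 5) hs hsδ hgrowth (by norm_num)
    have hsq : 10000 ^ 2 * δ ≤ (ε * δ ^ 2) ^ 2 * δ := by gcongr
    nlinarith [mul_le_mul_of_nonneg_left this (sq_nonneg ε)]
  have hA_cube : A ^ 3 ≤ (E * ε * s) * (E * ε ^ 2 * s ^ 2) := by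
    have hε3 : 10000 ^ 3 ≤ ε ^ 3 * δ ^ 6 := by
      rw [show ε ^ 3 * δ ^ 6 = (ε * δ ^ 2) ^ 3 by ring]; gcongr
    have hδ12 : δ ^ 12 ≤ (1792 * E * s ^ 6) ^ 2 := by
      rw [show δ ^ 12 = (δ ^ 6) ^ 2 by ring]; gcongr
    refine le_of_mul_le_mul_right (a := 10000 ^ 3 * s ^ 9) ?_ (by positivity)
    calc A ^ 3 * (10000 ^ 3 * s ^ 9) = 10000 ^ 3 * (A * s ^ 3) ^ 3 := by ring
      _ ≤ 10000 ^ 3 * (2 * δ ^ 2) ^ 3 := by gcongr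
      _ = 8 * 10000 ^ 3 * δ ^ 6 := by ring
      _ ≤ 8 * (ε ^ 3 * δ ^ 6) * δ ^ 6 := by gcongr
      _ = 8 * ε ^ 3 * δ ^ 12 := by ring
      _ ≤ 8 * ε ^ 3 * (1792 * E * s ^ 6) ^ 2 := by gcongr
      _ ≤ E * ε * s * (E * ε ^ 2 * s ^ 2) * (10000 ^ 3 * s ^ 9) := by
        nlinarith [pow_pos hE 2, pow_pos hε 3, pow_pos hs 12]
  have hosc : A ^ 2 * Q ≤ E * ε * s * (A * P) + E * ε ^ 2 * s ^ 2 / 2 := by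
    have h := sq_mul_le_of_pow_three_le (Q := Q) hA (by positivity) hA_cube
    have : E * ε * s * A * Q ^ 2 / 2 ≤ E * ε * s * (A * P) := by
      rw [mul_div_assoc, mul_assoc]; gcongr; nlinarith
    linarith
  have hgrow : 3 * A / s * P ≤ E * ε * s * (A * P) := by
    rw [div_mul_eq_mul_div, div_le_iff₀ hs]; nlinarith
  have hfloor : 2 * δ / s ^ 3 * P ≤ E * ε ^ 2 * s ^ 2 / 2 := by
    rw [div_mul_eq_mul_div, div_le_div_iff₀ (pow_pos hs 3) two_pos]; nlinarith
  nlinarith [mul_nonneg hE.le (sq_nonneg (A * P))]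

lemma limsup_coe_eq_top_of_tendsto {α β : Type*} {f : α → ℝ} {l : Filter α} {u : β → α}
    {lb : Filter β} [lb.NeBot] (hu : Tendsto u lb l) (hf : Tendsto (f ∘ u) lb atTop) :
    limsup (fun a => (f a : EReal)) l = ⊤ := by
  refine (EReal.eq_top_iff_forall_lt _).mpr fun y => ?_
  have hfreq : ∃ᶠ a in l, ((y + 1 : ℝ) : EReal) ≤ f a :=
    hu.frequently ((hf.eventually_ge_atTop (y + 1)).frequently.mono
      fun b hb => EReal.coe_le_coe_iff.mpr hb)
  exact (EReal.coe_lt_coe_iff.mpr (lt_add_one y)).trans_le (le_limsup_of_frequently_le' hfreq)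

namespace OscillatingSolution

noncomputable def phase (δ t : ℝ) : ℝ := (t / (δ - t)) ^ 2

noncomputable def amplitude (δ t : ℝ) : ℝ := 2 * t * δ / (δ - t) ^ 3

noncomputable def sol (δ ε t : ℝ) : ℝ := amplitude δ t * (1 - sin (phase δ t)) + ε * (δ - t)

noncomputable def solDeriv (δ ε t : ℝ) : ℝ :=
  (2 * δ / (δ - t) ^ 3 + 3 * amplitude δ t / (δ - t)) * (1 - sin (phase δ t))
    - amplitude δ t ^ 2 * cos (phase δ t) - ε

noncomputable def primitive (δ ε t : ℝ) : ℝ :=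
  phase δ t + cos (phase δ t) - 1 + ε * (δ ^ 2 - (δ - t) ^ 2) / 2

variable {δ ε t φ : ℝ}

lemma hasDerivAt_phase (ht : t ≠ δ) : HasDerivAt (phase δ) (amplitude δ t) t := by
  have hs : δ - t ≠ 0 := sub_ne_zero.mpr ht.symm
  have h := ((hasDerivAt_id' t).fun_div
    ((hasDerivAt_const t δ).fun_sub (hasDerivAt_id' t)) hs).fun_pow 2
  refine h.congr_deriv ?_
  rw [amplitude]
  norm_num
  field_simp

lemma hasDerivAt_amplitude (ht : t ≠ δ) :
    HasDerivAt (amplitude δ) (2 * δ / (δ - t) ^ 3 + 3 * amplitude δ t / (δ - t)) t := by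
  have hs : δ - t ≠ 0 := sub_ne_zero.mpr ht.symm
  have h := (((hasDerivAt_id' t).const_mul 2).mul_const δ).fun_div
    (((hasDerivAt_const t δ).fun_sub (hasDerivAt_id' t)).fun_pow 3) (pow_ne_zero 3 hs)
  refine h.congr_deriv ?_
  rw [amplitude]
  field_simp
  ring

lemma hasDerivAt_sol (ht : t ≠ δ) : HasDerivAt (sol δ ε) (solDeriv δ ε t) t := by
  have h := ((hasDerivAt_amplitude ht).fun_mul
    ((hasDerivAt_const t 1).fun_sub (hasDerivAt_phase ht).sin)).fun_add
    (((hasDerivAt_const t δ).fun_sub (hasDerivAt_id' t)).const_mul ε)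
  refine h.congr_deriv ?_
  rw [solDeriv]
  ring

lemma hasDerivAt_primitive (ht : t ≠ δ) : HasDerivAt (primitive δ ε) (sol δ ε t) t := by
  have h := ((((hasDerivAt_phase ht).fun_add (hasDerivAt_phase ht).cos).sub_const 1).fun_add
    ((((hasDerivAt_const t (δ ^ 2)).fun_sub
      (((hasDerivAt_const t δ).fun_sub (hasDerivAt_id' t)).fun_pow 2)).const_mul ε).div_const 2))
  refine h.congr_deriv ?_
  rw [sol]
  ring

lemma contDiffOn_sol : ContDiffOn ℝ 1 (sol δ ε) (Iio δ) := by
  have hs : ∀ t ∈ Iio δ, δ - t ≠ 0 := fun t ht => sub_ne_zero.mpr (ne_of_gt ht)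
  unfold sol amplitude phase
  fun_prop (disch := simp_all)

lemma sol_zero : sol δ ε 0 = ε * δ := by simp [sol, amplitude, phase]

lemma primitive_zero : primitive δ ε 0 = 0 := by simp [primitive, phase]

lemma integral_sol (ht₀ : 0 ≤ t) (ht : t < δ) : ∫ s in (0:ℝ)..t, sol δ ε s = primitive δ ε t := by
  have hsub : uIcc 0 t ⊆ Iio δ := by
    rw [uIcc_of_le ht₀]; exact fun s hs => hs.2.trans_lt ht
  rw [intervalIntegral.integral_eq_sub_of_hasDerivAt
    (fun s hs => hasDerivAt_primitive (ne_of_lt (hsub hs)))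
    ((contDiffOn_sol.continuousOn.mono hsub).intervalIntegrable), primitive_zero, sub_zero]

lemma amplitude_nonneg (ht₀ : 0 ≤ t) (ht : t < δ) : 0 ≤ amplitude δ t := by
  have : 0 < δ - t := sub_pos.mpr ht
  have : 0 ≤ δ := by linarith
  unfold amplitude; positivity

lemma sol_pos (hε : 0 < ε) (ht₀ : 0 ≤ t) (ht : t < δ) : 0 < sol δ ε t :=
  add_pos_of_nonneg_of_pos
    (mul_nonneg (amplitude_nonneg ht₀ ht) (sub_nonneg.mpr (sin_le_one _)))
    (mul_pos hε (sub_pos.mpr ht))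

lemma phase_sub_two_le_primitive (hε : 0 ≤ ε) (ht₀ : 0 ≤ t) (ht : t ≤ δ) :
    phase δ t - 2 ≤ primitive δ ε t := by
  have : 0 ≤ ε * (δ ^ 2 - (δ - t) ^ 2) / 2 := by
    have : 0 ≤ δ ^ 2 - (δ - t) ^ 2 := by nlinarith
    positivity
  unfold primitive; linarith [neg_one_le_cos (phase δ t)]

lemma solDeriv_le (hε : 0 < ε) (hεδ : 10000 ≤ ε * δ ^ 2) (ht₀ : 0 ≤ t) (ht : t < δ) :
    solDeriv δ ε t ≤ sol δ ε t + sol δ ε t ^ 2 * exp (primitive δ ε t) := by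
  set s := δ - t with hs_def
  have hs : 0 < s := sub_pos.mpr ht
  have hgrowth : δ ^ 6 ≤ 1792 * exp (primitive δ ε t) * s ^ 6 := by
    have h := one_add_pow_six_le_exp (div_nonneg ht₀ hs.le)
    rw [show 1 + t / s = δ / s by field_simp; ring, div_pow, div_le_iff₀ (pow_pos hs 6)] at h
    refine h.trans ?_
    gcongr
    exact phase_sub_two_le_primitive hε.le ht₀ ht.le
  have hAs : amplitude δ t * s ^ 3 ≤ 2 * δ ^ 2 := by
    rw [amplitude, div_mul_cancel₀ _ (pow_ne_zero 3 hs.ne')]; nlinarith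
  have hQ : (-cos (phase δ t)) ^ 2 ≤ 2 * (1 - sin (phase δ t)) := by
    nlinarith [sin_sq_add_cos_sq (phase δ t), sin_le_one (phase δ t), neg_one_le_sin (phase δ t)]
  have h := deriv_le_sq_mul_of_growth hs (by linarith) hε (exp_pos _)
    (amplitude_nonneg ht₀ ht) hAs (sub_nonneg.mpr (sin_le_one _))
    (by linarith [neg_one_le_sin (phase δ t)]) hQ hgrowth hεδ
  have hsol := sol_pos hε ht₀ ht
  simp only [solDeriv, sol, ← hs_def] at hsol ⊢
  linarith

noncomputable def phaseInv (δ φ : ℝ) : ℝ := δ * √φ / (1 + √φ)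

lemma sub_phaseInv (δ φ : ℝ) : δ - phaseInv δ φ = δ / (1 + √φ) := by
  have : 1 + √φ ≠ 0 := by positivity
  unfold phaseInv; field_simp; ring

lemma phaseInv_lt (hδ : 0 < δ) (φ : ℝ) : phaseInv δ φ < δ := by
  have : 0 < δ - phaseInv δ φ := by rw [sub_phaseInv]; positivity
  linarith

lemma phaseInv_nonneg (hδ : 0 ≤ δ) (φ : ℝ) : 0 ≤ phaseInv δ φ := by
  unfold phaseInv; positivity

lemma monotone_phaseInv (hδ : 0 ≤ δ) : Monotone (phaseInv δ) := by
  intro φ ψ h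
  have h' : δ / (1 + √ψ) ≤ δ / (1 + √φ) := by gcongr
  linarith [sub_phaseInv δ φ, sub_phaseInv δ ψ]

lemma tendsto_phaseInv (hδ : 0 < δ) : Tendsto (phaseInv δ) atTop (𝓝[<] δ) := by
  refine tendsto_nhdsWithin_of_tendsto_nhds_of_eventually_within _ ?_
    (Eventually.of_forall (phaseInv_lt hδ))
  have h : Tendsto (fun φ => δ / (1 + √φ)) atTop (𝓝 0) :=
    tendsto_const_nhds.div_atTop (tendsto_atTop_add_const_left _ 1 tendsto_sqrt_atTop)
  have := (tendsto_const_nhds (x := δ)).sub h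
  rw [sub_zero] at this
  exact this.congr fun φ => by rw [← sub_phaseInv, sub_sub_cancel]

lemma phase_phaseInv (hδ : 0 < δ) (hφ : 0 ≤ φ) : phase δ (phaseInv δ φ) = φ := by
  have : 1 + √φ ≠ 0 := by positivity
  rw [phase, sub_phaseInv, phaseInv, div_div_div_cancel_right₀ this, mul_div_cancel_left₀ _ hδ.ne',
    sq_sqrt hφ]

lemma amplitude_phaseInv (hδ : 0 < δ) (φ : ℝ) :
    amplitude δ (phaseInv δ φ) = 2 * √φ * (1 + √φ) ^ 2 / δ := by
  have : 1 + √φ ≠ 0 := by positivity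
  rw [amplitude, sub_phaseInv, phaseInv]
  field_simp

lemma le_amplitude_phaseInv (hδ : 0 < δ) (hφ : 0 ≤ φ) :
    2 * φ / δ ≤ amplitude δ (phaseInv δ φ) := by
  rw [amplitude_phaseInv hδ]
  refine div_le_div_of_nonneg_right ?_ hδ.le
  nlinarith [sq_sqrt hφ, sqrt_nonneg φ]

lemma sol_phaseInv (hδ : 0 < δ) (hφ : 0 ≤ φ) :
    sol δ ε (phaseInv δ φ) = amplitude δ (phaseInv δ φ) * (1 - sin φ) + ε * δ / (1 + √φ) := by
  rw [sol, phase_phaseInv hδ hφ, sub_phaseInv, mul_div_assoc]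

noncomputable def trough (k : ℕ) : ℝ := π / 2 + k * (2 * π)

lemma sin_trough (k : ℕ) : sin (trough k) = 1 := by
  rw [trough, sin_add_nat_mul_two_pi, sin_pi_div_two]

lemma sin_trough_add_pi (k : ℕ) : sin (trough k + π) = -1 := by
  rw [sin_add_pi, sin_trough]

lemma natCast_le_trough (k : ℕ) : (k : ℝ) ≤ trough k := by
  unfold trough; nlinarith [pi_gt_three, k.cast_nonneg (α := ℝ)]

lemma tendsto_trough : Tendsto trough atTop atTop :=
  tendsto_atTop_mono natCast_le_trough tendsto_natCast_atTop_atTop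

lemma sol_phaseInv_trough (hδ : 0 < δ) (k : ℕ) :
    sol δ ε (phaseInv δ (trough k)) = ε * δ / (1 + √(trough k)) := by
  rw [sol_phaseInv hδ ((k.cast_nonneg).trans (natCast_le_trough k)), sin_trough]; ring

lemma le_sol_phaseInv_trough_add_pi (hδ : 0 < δ) (hε : 0 ≤ ε) (k : ℕ) :
    4 * (trough k + π) / δ ≤ sol δ ε (phaseInv δ (trough k + π)) := by
  have hφ : 0 ≤ trough k + π := by linarith [natCast_le_trough k, k.cast_nonneg (α := ℝ), pi_pos]
  rw [sol_phaseInv hδ hφ, sin_trough_add_pi]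
  have := le_amplitude_phaseInv hδ hφ
  have : 0 ≤ ε * δ / (1 + √(trough k + π)) := by positivity
  have : 4 * (trough k + π) / δ = 2 * (2 * (trough k + π) / δ) := by ring
  linarith

lemma limsup_sol_eq_top (hδ : 0 < δ) (hε : 0 ≤ ε) :
    limsup (fun t => (sol δ ε t : EReal)) (𝓝[<] δ) = ⊤ := by
  have hcrest : Tendsto (fun k => trough k + π) atTop atTop :=
    tendsto_atTop_add_const_right _ π tendsto_trough
  refine limsup_coe_eq_top_of_tendsto ((tendsto_phaseInv hδ).comp hcrest) ?_
  refine tendsto_atTop_mono (le_sol_phaseInv_trough_add_pi hδ hε) ?_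
  exact (hcrest.const_mul_atTop (by norm_num : (0:ℝ) < 4)).atTop_div_const hδ

lemma exists_sol_eq (hδ : 0 < δ) (hε : 0 ≤ ε) (k : ℕ) {y : ℝ}
    (hy₁ : ε * δ / (1 + √(trough k)) ≤ y) (hy₂ : y ≤ 4 * (trough k + π) / δ) :
    ∃ t ∈ Icc (phaseInv δ (trough k)) (phaseInv δ (trough k + π)), sol δ ε t = y := by
  have hsub : Icc (phaseInv δ (trough k)) (phaseInv δ (trough k + π)) ⊆ Iio δ :=
    fun t ht => ht.2.trans_lt (phaseInv_lt hδ _)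
  refine intermediate_value_Icc (monotone_phaseInv hδ.le (by linarith [pi_pos]))
    (contDiffOn_sol.continuousOn.mono hsub) ⟨?_, ?_⟩
  · rwa [sol_phaseInv_trough hδ]
  · exact hy₂.trans (le_sol_phaseInv_trough_add_pi hδ hε k)

lemma exists_seq_sol_eq (hδ : 0 < δ) (hε : 0 ≤ ε) :
    ∃ tn : ℕ → ℝ, (∀ n, tn n ∈ Ico 0 δ) ∧ Tendsto tn atTop (𝓝 δ) ∧
      ∀ n : ℕ, sol δ ε (tn n) = ε * δ / (n + 1) := by
  set k : ℕ → ℕ := fun n => n ^ 2 + ⌈ε * δ ^ 2⌉₊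
  have hk : ∀ n : ℕ, (n : ℝ) ^ 2 + ε * δ ^ 2 ≤ trough (k n) := fun n => by
    have := natCast_le_trough (k n)
    have := Nat.le_ceil (ε * δ ^ 2)
    push_cast [k] at *
    linarith
  have hexists : ∀ n : ℕ, ∃ t ∈ Icc (phaseInv δ (trough (k n))) (phaseInv δ (trough (k n) + π)),
      sol δ ε t = ε * δ / (n + 1) := fun n => by
    refine exists_sol_eq hδ hε (k n) ?_ ?_
    · have : (n : ℝ) ≤ √(trough (k n)) :=
        le_sqrt_of_sq_le (by nlinarith [hk n, mul_nonneg hε (sq_nonneg δ)])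
      exact div_le_div_of_nonneg_left (by positivity) (by positivity) (by linarith)
    · rw [le_div_iff₀ hδ]
      have : ε * δ / (n + 1) * δ ≤ ε * δ ^ 2 := by
        rw [div_mul_eq_mul_div, div_le_iff₀ (by positivity)]
        nlinarith [mul_nonneg hε (sq_nonneg δ), n.cast_nonneg (α := ℝ)]
      nlinarith [hk n, pi_pos, sq_nonneg (n : ℝ)]
  choose tn htn hsol using hexists
  refine ⟨tn, fun n => ⟨(phaseInv_nonneg hδ.le _).trans (htn n).1,
    (htn n).2.trans_lt (phaseInv_lt hδ _)⟩, ?_, hsol⟩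
  have hk_tendsto : Tendsto k atTop atTop :=
    tendsto_atTop_mono (fun n => (Nat.le_self_pow two_ne_zero n).trans (Nat.le_add_right _ _))
      tendsto_id
  refine tendsto_of_tendsto_of_tendsto_of_le_of_le (tendsto_nhds_of_tendsto_nhdsWithin
    ((tendsto_phaseInv hδ).comp (tendsto_trough.comp hk_tendsto)))
    tendsto_const_nhds (fun n => (htn n).1) (fun n => ((htn n).2.trans_lt (phaseInv_lt hδ _)).le)

end OscillatingSolution

open OscillatingSolution in
/-- For every `M > 0` there exist `T* > 0` and a `C¹` function
`x : [0, T*) → (0, ∞)` with `x 0 = M`, satisfying the Gronwall-type inequality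
`x' t ≤ x t + (x t)^2 * exp (∫₀ᵗ x)` on `[0, T*)`, with
`limsup_{t → T*⁻} x t = ∞`, and with a sequence `t n → T*⁻` such that
`x (t n) = M / (n + 1)`. -/
theorem oscillating_solution_exists (M : ℝ) (hM : 0 < M) :
    ∃ T : ℝ, 0 < T ∧ ∃ x : ℝ → ℝ,
      ContDiffOn ℝ 1 x (Set.Ico 0 T) ∧
      (∀ t ∈ Set.Ico (0:ℝ) T, 0 < x t) ∧
      x 0 = M ∧
      (∀ t ∈ Set.Ico (0:ℝ) T,
        derivWithin x (Set.Ico 0 T) t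
          ≤ x t + (x t) ^ 2 * Real.exp (∫ s in (0:ℝ)..t, x s)) ∧
      Filter.limsup (fun t => (x t : EReal)) (nhdsWithin T (Set.Iio T)) = ⊤ ∧
      ∃ tn : ℕ → ℝ, (∀ n, tn n ∈ Set.Ico (0:ℝ) T) ∧
        Filter.Tendsto tn Filter.atTop (nhds T) ∧
        ∀ n : ℕ, x (tn n) = M / (n + 1) := by
  set T := 10000 / M
  set ε := M / T
  have hT : 0 < T := by positivity
  have hε : 0 < ε := by positivity
  have hεT : ε * T = M := div_mul_cancel₀ M hT.ne'
  have hεT_sq : 10000 ≤ ε * T ^ 2 := by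
    rw [sq, ← mul_assoc, hεT, mul_div_cancel₀ _ hM.ne']
  refine ⟨T, hT, sol T ε, contDiffOn_sol.mono fun t ht => ht.2, fun t ht => sol_pos hε ht.1 ht.2,
    by rw [sol_zero, hεT], fun t ht => ?_, limsup_sol_eq_top hT hε.le, ?_⟩
  · rw [(hasDerivAt_sol ht.2.ne).hasDerivWithinAt.derivWithin (uniqueDiffOn_Ico 0 T t ht),
      integral_sol ht.1 ht.2]
    exact solDeriv_le hε hεT_sq ht.1 ht.2
  · simpa only [hεT] using exists_seq_sol_eq hT hε.le
end

section
/- For every real number M > 0 there exist a time T* = T*(M) > 0 and a continuously differentiable function x : [0, T*) → (0, ∞) such that x(0) = M, x'(t) ≤ x(t) + x(t)² · exp(∫₀ᵗ x(s) ds) for all t ∈ [0, T*), limsup_{t → T*⁻} x(t) = ∞, and liminf_{t → T*⁻} x(t) = 0. -/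
/-!
With `θ(t) = -log (1 - k t)`, which increases from `0` to `∞` on `[0, 1/k)` with
`θ' = k e^θ`, take `x = 3 k e^θ (1 - cos θ) + M e^{-θ}`. At `θ ∈ 2πℕ` the first term vanishes
and `x = M e^{-θ} → 0`, at `θ ∈ π + 2πℕ` it is `6 k e^θ → ∞`. One computes
`x' = 3 (k e^θ)² (1 - cos θ + sin θ) - M k` and `∫₀ᵗ x ≥ 3 (θ - sin θ)`; for `2 k ≤ M e^{-2}`,
the bounds `sin² θ ≤ 2 (1 - cos θ)` and `3 sin θ ≤ 2 + θ` then give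
`x' ≤ x² e^{3 (θ - sin θ)}`.
-/

open Set Filter Real Topology

section Limits

variable {α β : Type*} {f : α → ℝ} {l : Filter α} {u : β → α} {m : Filter β}

theorem limsup_coe_eq_top_of_tendsto_comp [m.NeBot] (hu : Tendsto u m l)
    (hf : Tendsto (f ∘ u) m atTop) : limsup (fun a => (f a : EReal)) l = ⊤ := by
  have hcomp : Tendsto (fun b => (f (u b) : EReal)) m (𝓝 ⊤) :=
    EReal.tendsto_nhds_top_iff_real.2 fun r =>
      (hf.eventually_gt_atTop r).mono fun _ h => EReal.coe_lt_coe_iff.2 h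
  exact top_le_iff.1
    (hcomp.limsup_eq ▸ limsup_le_limsup_of_le (u := fun a => (f a : EReal)) hu)

theorem liminf_coe_eq_zero_of_tendsto_comp [m.NeBot] (hu : Tendsto u m l)
    (hf : Tendsto (f ∘ u) m (𝓝 0)) (hf0 : ∀ᶠ a in l, 0 ≤ f a) :
    liminf (fun a => (f a : EReal)) l = 0 := by
  have hcomp : Tendsto (fun b => (f (u b) : EReal)) m (𝓝 0) :=
    (continuous_coe_real_ereal.tendsto 0).comp hf
  refine le_antisymm (hcomp.liminf_eq ▸ liminf_le_liminf_of_le hu) ?_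
  exact le_liminf_of_le (by isBoundedDefault) (hf0.mono fun _ h => EReal.coe_nonneg.2 h)

end Limits

-- `x' + M k ≤ x² e^{3 (θ - sin θ)}` in the variables `q = k e^θ`, `c = 1 - cos θ`, `s = sin θ`,
-- `d = M e^{-θ}`, `E = e^{3 (θ - sin θ)}`.
theorem three_mul_sq_mul_add_le {q c s d E : ℝ} (hq : 0 ≤ q) (hc : 0 ≤ c) (hd : 0 ≤ d)
    (hE : 0 ≤ E) (hs : s ^ 2 ≤ 2 * c) (hqd : q ≤ d * E) (hcube : 6 * q ^ 3 ≤ d ^ 3 * E ^ 2) :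
    3 * q ^ 2 * (c + s) ≤ (3 * q * c + d) ^ 2 * E := by
  set X := 3 * q * c
  have hX0 : 0 ≤ X := by positivity
  have hc_part : 3 * q ^ 2 * c ≤ X * d * E := by
    calc 3 * q ^ 2 * c = X * q := by ring
    _ ≤ X * (d * E) := by gcongr
    _ = X * d * E := by ring
  have hs_part : 3 * q ^ 2 * s ≤ (X ^ 2 + d ^ 2) * E := by
    refine abs_le_of_sq_le_sq' ?_ (by positivity) |>.2
    have hXd : d ^ 3 * X ≤ (X ^ 2 + d ^ 2) ^ 2 := by
      nlinarith [sq_nonneg (X - d), sq_nonneg (X + d), mul_nonneg hX0 hd, sq_nonneg X, sq_nonneg d]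
    calc (3 * q ^ 2 * s) ^ 2 = 9 * q ^ 4 * s ^ 2 := by ring
    _ ≤ 9 * q ^ 4 * (2 * c) := by gcongr
    _ = 6 * q ^ 3 * X := by ring
    _ ≤ d ^ 3 * E ^ 2 * X := by gcongr
    _ ≤ (X ^ 2 + d ^ 2) ^ 2 * E ^ 2 := by nlinarith [sq_nonneg E]
    _ = ((X ^ 2 + d ^ 2) * E) ^ 2 := by ring
  nlinarith [mul_nonneg (mul_nonneg hX0 hd) hE]

namespace Oscillating

variable (k M : ℝ)

noncomputable def phase (t : ℝ) : ℝ := -log (1 - k * t)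

noncomputable def phaseInv (φ : ℝ) : ℝ := (1 - exp (-φ)) / k

noncomputable def profile (θ : ℝ) : ℝ := 3 * k * exp θ * (1 - cos θ) + M * exp (-θ)

noncomputable def solution (t : ℝ) : ℝ := profile k M (phase k t)

variable {k M}

theorem phase_zero : phase k 0 = 0 := by simp [phase]

theorem phase_nonneg {t : ℝ} (hk : 0 ≤ k) (ht : 0 ≤ t) (hkt : k * t < 1) : 0 ≤ phase k t :=
  neg_nonneg.2 (log_nonpos (by linarith) (by nlinarith))

theorem exp_phase {t : ℝ} (hkt : k * t < 1) : exp (phase k t) = (1 - k * t)⁻¹ := by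
  rw [phase, exp_neg, exp_log (by linarith)]

theorem phase_phaseInv (hk : k ≠ 0) (φ : ℝ) : phase k (phaseInv k φ) = φ := by
  simp [phase, phaseInv, mul_div_cancel₀ _ hk]

theorem phaseInv_lt_inv (hk : 0 < k) (φ : ℝ) : phaseInv k φ < k⁻¹ := by
  rw [phaseInv, div_eq_mul_inv]
  exact mul_lt_of_lt_one_left (inv_pos.2 hk) (by linarith [exp_pos (-φ)])

theorem tendsto_phaseInv (hk : 0 < k) : Tendsto (phaseInv k) atTop (𝓝[<] k⁻¹) := by
  refine tendsto_nhdsWithin_of_tendsto_nhds_of_eventually_within _ ?_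
    (Eventually.of_forall (phaseInv_lt_inv hk))
  have h : Tendsto (fun φ => (1 - exp (-φ)) / k) atTop (𝓝 ((1 - 0) / k)) :=
    ((tendsto_exp_atBot.comp tendsto_neg_atTop_atBot).const_sub 1).div_const k
  rwa [sub_zero, one_div] at h

theorem hasDerivAt_phase {t : ℝ} (hkt : k * t < 1) :
    HasDerivAt (phase k) (k * exp (phase k t)) t := by
  have h : HasDerivAt (fun s => 1 - k * s) (-k) t := by
    simpa using ((hasDerivAt_id t).const_mul k).const_sub 1
  refine (h.log (by linarith)).neg.congr_deriv ?_
  rw [exp_phase hkt]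
  ring

theorem contDiffOn_phase : ContDiffOn ℝ 1 (phase k) {t | k * t < 1} :=
  ((contDiffOn_const.sub (contDiffOn_const.mul contDiffOn_id)).log
    fun t (ht : k * t < 1) => by simp only [id]; linarith).neg

theorem profile_pos (hk : 0 ≤ k) (hM : 0 < M) (θ : ℝ) : 0 < profile k M θ := by
  have : 0 ≤ 1 - cos θ := by linarith [cos_le_one θ]
  unfold profile
  positivity

theorem hasDerivAt_profile (θ : ℝ) :
    HasDerivAt (profile k M) (3 * k * exp θ * (1 - cos θ + sin θ) - M * exp (-θ)) θ := by
  have h := (((hasDerivAt_exp θ).const_mul (3 * k)).mul ((hasDerivAt_cos θ).const_sub 1)).add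
    ((hasDerivAt_exp (-θ)).comp θ (hasDerivAt_neg θ) |>.const_mul M)
  refine h.congr_deriv ?_
  ring

theorem solution_zero : solution k M 0 = M := by simp [solution, phase_zero, profile]

theorem solution_phaseInv (hk : k ≠ 0) (φ : ℝ) :
    solution k M (phaseInv k φ) = profile k M φ := by
  rw [solution, phase_phaseInv hk]

theorem contDiffOn_solution : ContDiffOn ℝ 1 (solution k M) {t | k * t < 1} := by
  have : ContDiff ℝ 1 (profile k M) := by unfold profile; fun_prop
  exact this.comp_contDiffOn contDiffOn_phase

theorem hasDerivAt_solution {t : ℝ} (hkt : k * t < 1) :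
    HasDerivAt (solution k M)
      (3 * (k * exp (phase k t)) ^ 2 * (1 - cos (phase k t) + sin (phase k t)) - M * k) t := by
  refine ((hasDerivAt_profile (phase k t)).comp t (hasDerivAt_phase hkt)).congr_deriv ?_
  rw [exp_neg]
  field_simp

theorem integral_solution {t : ℝ} (hk : 0 ≤ k) (ht : 0 ≤ t) (hkt : k * t < 1) :
    ∫ s in (0 : ℝ)..t, solution k M s =
      3 * (phase k t - sin (phase k t)) + M * (t - k * t ^ 2 / 2) := by
  have hsub : uIcc 0 t ⊆ {s | k * s < 1} := by
    rw [uIcc_of_le ht]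
    exact fun s hs => lt_of_le_of_lt (mul_le_mul_of_nonneg_left hs.2 hk) hkt
  have hderiv : ∀ s ∈ uIcc 0 t,
      HasDerivAt (fun s => 3 * (phase k s - sin (phase k s)) + M * (s - k * s ^ 2 / 2))
        (solution k M s) s := by
    intro s hs
    have hks : k * s < 1 := hsub hs
    have hp := hasDerivAt_phase hks
    have hpoly : HasDerivAt (fun s : ℝ => s - k * s ^ 2 / 2) (1 - k * (2 * s ^ 1) / 2) s :=
      (hasDerivAt_id s).sub (((hasDerivAt_pow 2 s).const_mul k).div_const 2)
    refine (((hp.sub hp.sin).const_mul 3).add (hpoly.const_mul M)).congr_deriv ?_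
    rw [solution, profile, exp_neg, exp_phase hks, inv_inv]
    ring
  rw [intervalIntegral.integral_eq_sub_of_hasDerivAt hderiv
    ((contDiffOn_solution.continuousOn.mono hsub).intervalIntegrable)]
  simp [phase_zero]

theorem sq_mul_le_profile_sq_mul_exp {θ : ℝ} (hk : 0 < k) (hkM : 2 * k ≤ M * exp (-2))
    (hθ : 0 ≤ θ) :
    3 * (k * exp θ) ^ 2 * (1 - cos θ + sin θ) ≤ profile k M θ ^ 2 * exp (3 * (θ - sin θ)) := by
  have hM : 0 < M := pos_of_mul_pos_left (by linarith) (exp_pos _).le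
  have hsin : 3 * sin θ ≤ 2 + θ := by
    rcases le_total θ 1 with h | h <;> linarith [sin_le hθ, sin_le_one θ]
  have hq : k * exp θ ≤ M * exp (-θ) * exp (3 * (θ - sin θ)) :=
    calc k * exp θ ≤ M * exp (-2) * exp θ := by gcongr; linarith
    _ = M * exp (θ - 2) := by rw [mul_assoc, ← exp_add]; ring_nf
    _ ≤ M * exp (2 * θ - 3 * sin θ) := by gcongr M * exp ?_; linarith
    _ = M * exp (-θ) * exp (3 * (θ - sin θ)) := by rw [mul_assoc, ← exp_add]; ring_nf
  have hcube : 6 * (k * exp θ) ^ 3 ≤ (M * exp (-θ)) ^ 3 * exp (3 * (θ - sin θ)) ^ 2 :=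
    calc 6 * (k * exp θ) ^ 3 = 6 * k ^ 3 * exp (3 * θ) := by
          rw [mul_pow, ← exp_nat_mul]; ring_nf
    _ ≤ M ^ 3 * exp (-6) * exp (3 * θ) := by
      gcongr ?_ * exp (3 * θ)
      have h8 : 8 * k ^ 3 ≤ M ^ 3 * exp (-6) :=
        calc 8 * k ^ 3 = (2 * k) ^ 3 := by ring
        _ ≤ (M * exp (-2)) ^ 3 := by gcongr
        _ = M ^ 3 * exp (-6) := by rw [mul_pow, ← exp_nat_mul]; norm_num
      nlinarith [pow_pos hk 3]
    _ ≤ M ^ 3 * exp (3 * θ - 6 * sin θ) := by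
      rw [mul_assoc, ← exp_add]; gcongr; linarith [sin_le_one θ]
    _ = (M * exp (-θ)) ^ 3 * exp (3 * (θ - sin θ)) ^ 2 := by
      rw [mul_pow, ← exp_nat_mul, ← exp_nat_mul, mul_assoc, ← exp_add]; push_cast; ring_nf
  have hs : sin θ ^ 2 ≤ 2 * (1 - cos θ) := by
    nlinarith [sin_sq_add_cos_sq θ, cos_le_one θ, neg_one_le_cos θ]
  have h := three_mul_sq_mul_add_le (by positivity) (by linarith [cos_le_one θ]) (by positivity)
    (exp_pos _).le hs hq hcube
  rw [profile]
  linarith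

theorem deriv_solution_le {t : ℝ} (hk : 0 < k) (hkM : 2 * k ≤ M * exp (-2)) (ht : 0 ≤ t)
    (hkt : k * t < 1) :
    deriv (solution k M) t ≤
      solution k M t + solution k M t ^ 2 * exp (∫ s in (0 : ℝ)..t, solution k M s) := by
  have hM : 0 < M := pos_of_mul_pos_left (by linarith) (exp_pos _).le
  have hint : 3 * (phase k t - sin (phase k t)) ≤ ∫ s in (0 : ℝ)..t, solution k M s := by
    rw [integral_solution hk.le ht hkt]
    have : 0 ≤ t - k * t ^ 2 / 2 := by nlinarith
    nlinarith
  rw [(hasDerivAt_solution hkt).deriv]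
  calc 3 * (k * exp (phase k t)) ^ 2 * (1 - cos (phase k t) + sin (phase k t)) - M * k
      ≤ solution k M t ^ 2 * exp (3 * (phase k t - sin (phase k t))) := by
        have := sq_mul_le_profile_sq_mul_exp hk hkM (phase_nonneg hk.le ht hkt)
        rw [solution]
        nlinarith
    _ ≤ solution k M t ^ 2 * exp (∫ s in (0 : ℝ)..t, solution k M s) := by gcongr
    _ ≤ solution k M t + solution k M t ^ 2 * exp (∫ s in (0 : ℝ)..t, solution k M s) :=
        le_add_of_nonneg_left (profile_pos hk.le hM _).le

theorem limsup_solution_eq_top (hk : 0 < k) (hM : 0 ≤ M) :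
    limsup (fun t => (solution k M t : EReal)) (𝓝[<] k⁻¹) = ⊤ := by
  have hseq : Tendsto (fun n : ℕ => n * (2 * π) + π) atTop atTop :=
    tendsto_atTop_add_const_right _ π (tendsto_natCast_atTop_atTop.atTop_mul_const two_pi_pos)
  refine limsup_coe_eq_top_of_tendsto_comp ((tendsto_phaseInv hk).comp hseq) ?_
  refine tendsto_atTop_mono (fun n => ?_)
    ((tendsto_exp_atTop.comp hseq).const_mul_atTop (by positivity : (0 : ℝ) < 6 * k))
  simp only [Function.comp_apply, solution_phaseInv hk.ne', profile, cos_nat_mul_two_pi_add_pi]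
  have := exp_pos (-((n : ℝ) * (2 * π) + π))
  nlinarith

theorem liminf_solution_eq_zero (hk : 0 < k) (hM : 0 < M) :
    liminf (fun t => (solution k M t : EReal)) (𝓝[<] k⁻¹) = 0 := by
  have hseq := tendsto_natCast_atTop_atTop.atTop_mul_const two_pi_pos
  refine liminf_coe_eq_zero_of_tendsto_comp ((tendsto_phaseInv hk).comp hseq) ?_
    (Eventually.of_forall fun t => (profile_pos hk.le hM _).le)
  have h := ((tendsto_exp_atBot.comp (tendsto_neg_atTop_atBot.comp hseq)).const_mul M)
  rw [mul_zero] at h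
  refine h.congr fun n => ?_
  simp [solution_phaseInv hk.ne', profile, cos_nat_mul_two_pi]

end Oscillating

open Oscillating in
/-- For every `M > 0` there exist `T* > 0` and a `C¹` function
`x : [0, T*) → (0, ∞)` with `x 0 = M`, satisfying
`x' t ≤ x t + (x t)^2 * exp (∫₀ᵗ x)` on `[0, T*)`, with
`limsup_{t → T*⁻} x t = ∞` and `liminf_{t → T*⁻} x t = 0`. -/
theorem oscillating_solution_exists' (M : ℝ) (hM : 0 < M) :
    ∃ T : ℝ, 0 < T ∧ ∃ x : ℝ → ℝ,
      ContDiffOn ℝ 1 x (Set.Ico 0 T) ∧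
      (∀ t ∈ Set.Ico (0:ℝ) T, 0 < x t) ∧
      x 0 = M ∧
      (∀ t ∈ Set.Ico (0:ℝ) T,
        derivWithin x (Set.Ico 0 T) t
          ≤ x t + (x t) ^ 2 * Real.exp (∫ s in (0:ℝ)..t, x s)) ∧
      Filter.limsup (fun t => (x t : EReal)) (nhdsWithin T (Set.Iio T)) = ⊤ ∧
      Filter.liminf (fun t => (x t : EReal)) (nhdsWithin T (Set.Iio T)) = 0 := by
  set k := M * exp (-2) / 2 with hk_def
  have hk : 0 < k := by positivity
  have hkt : ∀ t ∈ Ico 0 k⁻¹, k * t < 1 := fun t ht => by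
    simpa [hk.ne'] using mul_lt_mul_of_pos_left ht.2 hk
  refine ⟨k⁻¹, inv_pos.2 hk, solution k M, contDiffOn_solution.mono hkt,
    fun t _ => profile_pos hk.le hM _, solution_zero, fun t ht => ?_,
    limsup_solution_eq_top hk hM.le, liminf_solution_eq_zero hk hM⟩
  rw [(hasDerivAt_solution (hkt t ht)).differentiableAt.derivWithin (uniqueDiffOn_Ico 0 _ t ht)]
  exact deriv_solution_le hk (by rw [hk_def]; linarith) ht.1 (hkt t ht)
end

section
/- Let M > 0 and let X : [0, ∞) → (0, ∞) be a C¹ function with X(0) = M satisfying X'(τ) ≤ 1 + X(τ)·e^τ for all τ ≥ 0, and suppose T* := ∫₀^∞ dτ / X(τ) < ∞. Define t(τ) = ∫₀^τ dτ' / X(τ'); then t is a C¹ diffeomorphism from [0, ∞) onto [0, T*) with inverse τ : [0, T*) → [0, ∞), and the function x := X ∘ τ : [0, T*) → (0, ∞) is C¹, satisfies x(0) = M, and satisfies x'(t) ≤ x(t) + x(t)² · exp(∫₀ᵗ x(s) ds) for all t ∈ [0, T*). -/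
/-!
The time change `t(τ) = ∫₀^τ 1 / X` has derivative `1 / X > 0` and tends to `T*`, so it is a `C¹`
increasing bijection `[0, ∞) → [0, T*)`; its inverse `τ` has derivative `1 / (1 / X (τ t)) = x t`.
Hence `∫₀ᵗ x = τ t`, and the chain rule turns the hypothesis on `X` into
`x' = X'(τ) X(τ) ≤ (1 + X(τ) e^τ) X(τ) = x + x² exp (∫₀ᵗ x)`.
-/

open Set Filter MeasureTheory Topology Function

section Primitive

variable {g : ℝ → ℝ} {a b c : ℝ}

theorem intervalIntegrable_of_continuousOn_Ici (hg : ContinuousOn g (Ici a))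
    (hb : b ∈ Ici a) (hc : c ∈ Ici a) : IntervalIntegrable g volume b c :=
  (hg.mono (ordConnected_Ici.uIcc_subset hb hc)).intervalIntegrable

theorem hasDerivWithinAt_intervalIntegral_Ici (hg : ContinuousOn g (Ici a)) (hb : b ∈ Ici a) :
    HasDerivWithinAt (fun u => ∫ x in a..u, g x) (g b) (Ici a) b := by
  have : Fact (b ∈ Icc a (b + 1)) := ⟨⟨hb, by linarith⟩⟩
  have hIcc : Icc a (b + 1) ⊆ Ici a := Icc_subset_Ici_self
  refine (intervalIntegral.integral_hasDerivWithinAt_right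
    (s := Icc a (b + 1)) (t := Icc a (b + 1))
    (intervalIntegrable_of_continuousOn_Ici hg self_mem_Ici hb)
    ((hg.mono hIcc).stronglyMeasurableAtFilter_nhdsWithin measurableSet_Icc b)
    ((hg b hb).mono hIcc)).mono_of_mem_nhdsWithin ?_
  rw [← Ici_inter_Iic]
  exact inter_mem_nhdsWithin _ (Iic_mem_nhds (lt_add_one b))

theorem strictMonoOn_intervalIntegral_of_pos (hg : ContinuousOn g (Ici a))
    (hpos : ∀ x ∈ Ici a, 0 < g x) : StrictMonoOn (fun u => ∫ x in a..u, g x) (Ici a) := by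
  intro u hu v hv huv
  have huv_pos : 0 < ∫ x in u..v, g x :=
    intervalIntegral.intervalIntegral_pos_of_pos_on
      (intervalIntegrable_of_continuousOn_Ici hg hu hv) (fun x hx => hpos x (hu.trans hx.1.le)) huv
  dsimp only
  rw [← intervalIntegral.integral_add_adjacent_intervals
    (intervalIntegrable_of_continuousOn_Ici hg self_mem_Ici hu)
    (intervalIntegrable_of_continuousOn_Ici hg hu hv)]
  linarith

theorem tendsto_intervalIntegral_integral_Ici (hint : IntegrableOn g (Ici a)) :
    Tendsto (fun u => ∫ x in a..u, g x) atTop (𝓝 (∫ x in Ici a, g x)) := by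
  rw [integral_Ici_eq_integral_Ioi]
  exact intervalIntegral_tendsto_integral_Ioi a (hint.mono_set Ioi_subset_Ici_self) tendsto_id

theorem image_intervalIntegral_Ici (hg : ContinuousOn g (Ici a)) (hpos : ∀ x ∈ Ici a, 0 < g x)
    (hint : IntegrableOn g (Ici a)) :
    (fun u => ∫ x in a..u, g x) '' Ici a = Ico 0 (∫ x in Ici a, g x) := by
  have hmono := strictMonoOn_intervalIntegral_of_pos hg hpos
  have htend := tendsto_intervalIntegral_integral_Ici hint
  apply Subset.antisymm
  · rintro _ ⟨b, hb, rfl⟩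
    have hb1 : b + 1 ∈ Ici a := mem_Ici.2 (by linarith [mem_Ici.1 hb])
    refine ⟨intervalIntegral.integral_nonneg hb fun x hx => (hpos x hx.1).le, ?_⟩
    calc ∫ x in a..b, g x < ∫ x in a..b + 1, g x := hmono hb hb1 (lt_add_one b)
      _ ≤ ∫ x in Ici a, g x := ge_of_tendsto htend <| eventually_atTop.2
          ⟨b + 1, fun u hu => hmono.monotoneOn hb1 (hb1.trans hu) hu⟩
  · rintro t ⟨ht0, htT⟩
    obtain ⟨c, hac, htc⟩ := ((eventually_ge_atTop a).and (htend.eventually_const_lt htT)).exists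
    have hcont : ContinuousOn (fun u => ∫ x in a..u, g x) (Icc a c) := fun x hx =>
      (hasDerivWithinAt_intervalIntegral_Ici hg hx.1).continuousWithinAt.mono Icc_subset_Ici_self
    obtain ⟨τ, hτ, rfl⟩ := intermediate_value_Icc hac hcont ⟨by simpa using ht0, htc.le⟩
    exact ⟨τ, hτ.1, rfl⟩

theorem bijOn_intervalIntegral_Ici (hg : ContinuousOn g (Ici a)) (hpos : ∀ x ∈ Ici a, 0 < g x)
    (hint : IntegrableOn g (Ici a)) :
    BijOn (fun u => ∫ x in a..u, g x) (Ici a) (Ico 0 (∫ x in Ici a, g x)) :=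
  image_intervalIntegral_Ici hg hpos hint ▸
    (strictMonoOn_intervalIntegral_of_pos hg hpos).injOn.bijOn_image

end Primitive

theorem HasDerivWithinAt.of_leftInvOn {𝕜 : Type*} [NontriviallyNormedField 𝕜] {f g : 𝕜 → 𝕜}
    {s t : Set 𝕜} {b f' : 𝕜} (hf : HasDerivWithinAt f f' s (g b)) (hf' : f' ≠ 0)
    (hg : ContinuousWithinAt g t b) (hgt : MapsTo g t s) (hfg : LeftInvOn f g t) (hb : b ∈ t) :
    HasDerivWithinAt g f'⁻¹ t b := by
  rw [hasDerivWithinAt_iff_tendsto_slope] at hf ⊢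
  have hmaps : MapsTo g (t \ {b}) (s \ {g b}) := fun y hy =>
    ⟨hgt hy.1, fun hgy => hy.2 <| by
      rw [mem_singleton_iff, ← hfg hy.1, ← hfg hb, mem_singleton_iff.1 hgy]⟩
  have hslope := (hf.comp ((hg.mono sdiff_subset).tendsto_nhdsWithin hmaps)).inv₀ hf'
  refine hslope.congr' ?_
  filter_upwards [self_mem_nhdsWithin] with y hy
  rw [comp_apply, slope_def_field, slope_def_field, hfg hy.1, hfg hb, inv_div]

theorem StrictMonoOn.strictMonoOn_of_rightInvOn {α β : Type*} [LinearOrder α] [Preorder β]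
    {f : α → β} {g : β → α} {s : Set α} {t : Set β} (hf : StrictMonoOn f s) (hgt : MapsTo g t s)
    (hfg : RightInvOn g f t) : StrictMonoOn g t := fun x hx y hy hxy =>
  (hf.lt_iff_lt (hgt hx) (hgt hy)).1 (by rwa [hfg hx, hfg hy])

theorem StrictMonoOn.continuousOn_of_image_eq_Ici {ψ : ℝ → ℝ} {a b c : ℝ}
    (hψ : StrictMonoOn ψ (Ico b c)) (himg : ψ '' Ico b c = Ici a) : ContinuousOn ψ (Ico b c) := by
  intro t ht
  have hψb : ∀ x ∈ Ico b c, a ≤ ψ x := fun x hx =>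
    (himg ▸ mem_image_of_mem ψ hx : ψ x ∈ Ici a)
  rcases ht.1.eq_or_lt with rfl | hbt
  · refine (hψ.continuousWithinAt_right_of_image_mem_nhdsWithin (Ico_mem_nhdsGE ht.2) ?_).mono
      Ico_subset_Ici_self
    rw [himg]
    exact mem_of_superset self_mem_nhdsWithin (Ici_subset_Ici.2 (hψb _ ht))
  · have hb : b ∈ Ico b c := ⟨le_rfl, hbt.trans ht.2⟩
    have ha : a < ψ t := (hψb b hb).trans_lt (hψ hb ht hbt)
    refine (hψ.continuousAt_of_image_mem_nhds ?_ (himg ▸ Ici_mem_nhds ha)).continuousWithinAt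
    exact mem_of_superset (Ioo_mem_nhds hbt ht.2) Ioo_subset_Ico_self

theorem hasDerivWithinAt_invFunOn_Ici {F F' : ℝ → ℝ} {a b c t : ℝ}
    (hF : StrictMonoOn F (Ici a)) (hbij : BijOn F (Ici a) (Ico b c))
    (hF' : ∀ x ∈ Ici a, HasDerivWithinAt F (F' x) (Ici a) x) (hF'0 : ∀ x ∈ Ici a, F' x ≠ 0)
    (ht : t ∈ Ico b c) :
    HasDerivWithinAt (invFunOn F (Ici a)) (F' (invFunOn F (Ici a) t))⁻¹ (Ico b c) t := by
  have hinv := hbij.invOn_invFunOn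
  have hmaps := hbij.surjOn.mapsTo_invFunOn
  have hcont := (hF.strictMonoOn_of_rightInvOn hmaps hinv.2).continuousOn_of_image_eq_Ici
    (hinv.symm.bijOn hmaps hbij.mapsTo).image_eq
  exact (hF' _ (hmaps ht)).of_leftInvOn (hF'0 _ (hmaps ht)) (hcont t ht) hmaps hinv.2 ht

theorem contDiffOn_one_of_hasDerivWithinAt {f f' : ℝ → ℝ} {s : Set ℝ} (hs : UniqueDiffOn ℝ s)
    (hf : ∀ x ∈ s, HasDerivWithinAt f (f' x) s x) (hf' : ContinuousOn f' s) :
    ContDiffOn ℝ 1 f s :=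
  (contDiffOn_one_iff_derivWithin hs).2 ⟨fun x hx => (hf x hx).differentiableWithinAt,
    hf'.congr fun x hx => (hf x hx).derivWithin (hs x hx)⟩

theorem integral_eq_sub_of_hasDerivWithinAt_Ico {φ φ' : ℝ → ℝ} {b c t : ℝ}
    (hφ : ∀ x ∈ Ico b c, HasDerivWithinAt φ (φ' x) (Ico b c) x) (hφ' : ContinuousOn φ' (Ico b c))
    (ht : t ∈ Ico b c) : ∫ x in b..t, φ' x = φ t - φ b := by
  have hsub : Icc b t ⊆ Ico b c := Icc_subset_Ico_right ht.2
  refine intervalIntegral.integral_eq_sub_of_hasDeriv_right_of_le ht.1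
    (fun x hx => (hφ x (hsub hx)).continuousWithinAt.mono hsub) (fun x hx => ?_)
    ((hφ'.mono hsub).intervalIntegrable_of_Icc ht.1)
  have hnhds : Ico b c ∈ 𝓝 x :=
    mem_of_superset (Ioo_mem_nhds hx.1 (hx.2.trans ht.2)) Ioo_subset_Ico_self
  exact ((hφ x (Ioo_subset_Icc_self.trans hsub hx)).hasDerivAt hnhds).hasDerivWithinAt

theorem solution_transfer_general (M : ℝ) (X : ℝ → ℝ)
    (hX : ContDiffOn ℝ 1 X (Set.Ici 0))
    (hXpos : ∀ τ ∈ Set.Ici (0:ℝ), 0 < X τ)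
    (hX0 : X 0 = M)
    (hXineq : ∀ τ ∈ Set.Ici (0:ℝ),
      derivWithin X (Set.Ici 0) τ ≤ 1 + X τ * Real.exp τ)
    (hInt : MeasureTheory.IntegrableOn (fun τ => 1 / X τ) (Set.Ici 0))
    (T : ℝ) (hT : T = ∫ τ in Set.Ici (0:ℝ), 1 / X τ)
    (tfun : ℝ → ℝ) (htfun : ∀ τ : ℝ, tfun τ = ∫ s in (0:ℝ)..τ, 1 / X s) :
    0 < T ∧
    StrictMonoOn tfun (Set.Ici 0) ∧
    ContDiffOn ℝ 1 tfun (Set.Ici 0) ∧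
    tfun '' Set.Ici 0 = Set.Ico 0 T ∧
    ∃ τinv : ℝ → ℝ,
      (∀ τ ∈ Set.Ici (0:ℝ), τinv (tfun τ) = τ) ∧
      (∀ t ∈ Set.Ico (0:ℝ) T, τinv t ∈ Set.Ici (0:ℝ) ∧ tfun (τinv t) = t) ∧
      ContDiffOn ℝ 1 τinv (Set.Ico 0 T) ∧
      ContDiffOn ℝ 1 (X ∘ τinv) (Set.Ico 0 T) ∧
      (∀ t ∈ Set.Ico (0:ℝ) T, 0 < (X ∘ τinv) t) ∧
      (X ∘ τinv) 0 = M ∧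
      (∀ t ∈ Set.Ico (0:ℝ) T,
        derivWithin (X ∘ τinv) (Set.Ico 0 T) t
          ≤ (X ∘ τinv) t + ((X ∘ τinv) t) ^ 2
              * Real.exp (∫ s in (0:ℝ)..t, (X ∘ τinv) s)) := by
  have htfun' : tfun = fun τ => ∫ s in (0:ℝ)..τ, 1 / X s := funext htfun
  have htfun0 : tfun 0 = 0 := by simp [htfun]
  have hg : ContinuousOn (fun τ => 1 / X τ) (Ici 0) :=
    continuousOn_const.div hX.continuousOn fun τ hτ => (hXpos τ hτ).ne'
  have hgpos : ∀ τ ∈ Ici (0:ℝ), 0 < 1 / X τ := fun τ hτ => one_div_pos.2 (hXpos τ hτ)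
  have hmono : StrictMonoOn tfun (Ici 0) :=
    htfun' ▸ strictMonoOn_intervalIntegral_of_pos hg hgpos
  have hderiv : ∀ τ ∈ Ici (0:ℝ), HasDerivWithinAt tfun (1 / X τ) (Ici 0) τ :=
    htfun' ▸ fun τ hτ => hasDerivWithinAt_intervalIntegral_Ici hg hτ
  have hbij : BijOn tfun (Ici 0) (Ico 0 T) :=
    htfun' ▸ hT ▸ bijOn_intervalIntegral_Ici hg hgpos hInt
  set τinv := invFunOn tfun (Ici 0)
  have hinv : InvOn τinv tfun (Ici 0) (Ico 0 T) := hbij.invOn_invFunOn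
  have hmaps : MapsTo τinv (Ico 0 T) (Ici 0) := hbij.surjOn.mapsTo_invFunOn
  have hτderiv : ∀ t ∈ Ico 0 T, HasDerivWithinAt τinv (X (τinv t)) (Ico 0 T) t := fun t ht =>
    (hasDerivWithinAt_invFunOn_Ici hmono hbij hderiv (fun τ hτ => (hgpos τ hτ).ne') ht).congr_deriv
      (by rw [one_div, inv_inv])
  have hxcont : ContinuousOn (X ∘ τinv) (Ico 0 T) :=
    hX.continuousOn.comp (fun t ht => (hτderiv t ht).continuousWithinAt) hmaps
  have hτC1 := contDiffOn_one_of_hasDerivWithinAt (uniqueDiffOn_Ico 0 T) hτderiv hxcont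
  have hτ0 : τinv 0 = 0 := by simpa [htfun0] using hinv.1 (self_mem_Ici : (0:ℝ) ∈ Ici 0)
  refine ⟨htfun0 ▸ (hbij.mapsTo (self_mem_Ici : (0:ℝ) ∈ Ici 0)).2, hmono,
    contDiffOn_one_of_hasDerivWithinAt (uniqueDiffOn_Ici 0) hderiv hg, hbij.image_eq, τinv,
    fun τ hτ => hinv.1 hτ, fun t ht => ⟨hmaps ht, hinv.2 ht⟩, hτC1, hX.comp hτC1 hmaps,
    fun t ht => hXpos _ (hmaps ht), by simp [hτ0, hX0], fun t ht => ?_⟩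
  rw [derivWithin_comp t (hX.differentiableOn one_ne_zero _ (hmaps ht))
      (hτderiv t ht).differentiableWithinAt hmaps,
    (hτderiv t ht).derivWithin (uniqueDiffOn_Ico 0 T t ht),
    integral_eq_sub_of_hasDerivWithinAt_Ico (φ' := X ∘ τinv) hτderiv hxcont ht, hτ0, sub_zero,
    comp_apply]
  calc derivWithin X (Ici 0) (τinv t) * X (τinv t)
      ≤ (1 + X (τinv t) * Real.exp (τinv t)) * X (τinv t) :=
        mul_le_mul_of_nonneg_right (hXineq _ (hmaps ht)) (hXpos _ (hmaps ht)).le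
    _ = X (τinv t) + X (τinv t) ^ 2 * Real.exp (τinv t) := by ring

/-- If `X : [0, ∞) → (0, ∞)` is `C¹` with `X 0 = M`, satisfies
`X' τ ≤ 1 + X τ * e^τ`, and `T* = ∫₀^∞ dτ / X τ < ∞`, then
`t(τ) = ∫₀^τ dτ' / X τ'` is a `C¹` diffeomorphism from `[0, ∞)` onto `[0, T*)`
with inverse `τ`, and `x := X ∘ τ` is `C¹`, has `x 0 = M`, and satisfies
`x' t ≤ x t + (x t)^2 * exp (∫₀ᵗ x)` on `[0, T*)`. -/
theorem solution_transfer (M : ℝ) (hM : 0 < M) (X : ℝ → ℝ)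
    (hX : ContDiffOn ℝ 1 X (Set.Ici 0))
    (hXpos : ∀ τ ∈ Set.Ici (0:ℝ), 0 < X τ)
    (hX0 : X 0 = M)
    (hXineq : ∀ τ ∈ Set.Ici (0:ℝ),
      derivWithin X (Set.Ici 0) τ ≤ 1 + X τ * Real.exp τ)
    (hInt : MeasureTheory.IntegrableOn (fun τ => 1 / X τ) (Set.Ici 0))
    (T : ℝ) (hT : T = ∫ τ in Set.Ici (0:ℝ), 1 / X τ)
    (tfun : ℝ → ℝ) (htfun : ∀ τ : ℝ, tfun τ = ∫ s in (0:ℝ)..τ, 1 / X s) :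
    0 < T ∧
    StrictMonoOn tfun (Set.Ici 0) ∧
    ContDiffOn ℝ 1 tfun (Set.Ici 0) ∧
    tfun '' Set.Ici 0 = Set.Ico 0 T ∧
    ∃ τinv : ℝ → ℝ,
      (∀ τ ∈ Set.Ici (0:ℝ), τinv (tfun τ) = τ) ∧
      (∀ t ∈ Set.Ico (0:ℝ) T, τinv t ∈ Set.Ici (0:ℝ) ∧ tfun (τinv t) = t) ∧
      ContDiffOn ℝ 1 τinv (Set.Ico 0 T) ∧
      ContDiffOn ℝ 1 (X ∘ τinv) (Set.Ico 0 T) ∧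
      (∀ t ∈ Set.Ico (0:ℝ) T, 0 < (X ∘ τinv) t) ∧
      (X ∘ τinv) 0 = M ∧
      (∀ t ∈ Set.Ico (0:ℝ) T,
        derivWithin (X ∘ τinv) (Set.Ico 0 T) t
          ≤ (X ∘ τinv) t + ((X ∘ τinv) t) ^ 2
              * Real.exp (∫ s in (0:ℝ)..t, (X ∘ τinv) s)) :=
  solution_transfer_general M X hX hXpos hX0 hXineq hInt T hT tfun htfun
end

section
/- For every real number M > 0 there exists a C¹ function X : [0, ∞) → (0, ∞) such that: X(0) = M; X'(τ) ≤ 1 + X(τ)·e^τ for all τ ≥ 0; X(n) = M/(n+1) for every integer n ≥ 0; limsup_{τ → ∞} X(τ) = ∞; and ∫₀^∞ dτ / X(τ) < ∞. -/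
/-!
Take `X τ = M / (τ + 1) + (M / 8) sin² (π τ) e^{τ / 2}`. The sine factor vanishes at the integers,
where `X n = M / (n + 1)`, while at `τ = 2n + 1/2` the bump term is of size `e^{τ / 2}`, so the
limsup is infinite. The bump term has derivative at most `(M / 2) e^{τ / 2} ≤ M e^τ / (τ + 1)`,
which gives the differential inequality. On `[n, n + 1]`, `1 / X ≤ (n + 2) / M` on the two end
pieces of length `e^{-n/8}`, and `|sin (π τ)| ≥ 2 e^{-n/8}` in between, where therefore
`1 / X ≤ 2 e^{-n/4} / M`; these bounds are summable in `n`.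
-/

open Set Filter MeasureTheory Real
open scoped ENNReal

theorem two_mul_le_sin_pi_mul {δ t : ℝ} (hδ : 0 ≤ δ) (h₁ : δ ≤ t) (h₂ : t ≤ 1 - δ) :
    2 * δ ≤ sin (π * t) := by
  have key : ∀ u, δ ≤ u → u ≤ 1 / 2 → 2 * δ ≤ sin (π * u) := fun u hu₁ hu₂ => by
    have h := mul_le_sin (x := π * u) (by nlinarith [pi_pos]) (by nlinarith [pi_pos])
    rw [← mul_assoc, div_mul_cancel₀ _ pi_ne_zero] at h
    linarith
  rcases le_total t (1 / 2) with ht | ht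
  · exact key t h₁ ht
  · rw [← sin_pi_sub, ← mul_one_sub]
    exact key (1 - t) (by linarith) (by linarith)

theorem sq_two_mul_le_sin_sq_pi_mul {δ τ : ℝ} {n : ℕ} (hδ : 0 ≤ δ)
    (hτ : τ ∈ Icc (n + δ) (n + 1 - δ)) : (2 * δ) ^ 2 ≤ sin (π * τ) ^ 2 := by
  have hshift : sin (π * τ) ^ 2 = sin (π * (τ - n)) ^ 2 := by
    rw [show π * τ = π * (τ - n) + n * π by ring, sin_add_nat_mul_pi, mul_pow, ← pow_mul,
      mul_comm n, pow_mul, neg_one_sq, one_pow, one_mul]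
  rw [hshift]
  exact pow_le_pow_left₀ (by positivity)
    (two_mul_le_sin_pi_mul hδ (by linarith [hτ.1]) (by linarith [hτ.2])) 2

theorem limsup_coe_eq_top_of_tendsto_comp_s5 {α β : Type*} {l : Filter α} {l' : Filter β} [l'.NeBot]
    {f : α → ℝ} {τ : β → α} (hτ : Tendsto τ l' l) (hf : Tendsto (f ∘ τ) l' atTop) :
    limsup (fun x => (f x : EReal)) l = ⊤ := by
  refine top_unique ?_
  calc (⊤ : EReal) = limsup (fun n => (f (τ n) : EReal)) l' :=
        ((EReal.tendsto_coe_atTop.comp hf).limsup_eq).symm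
    _ = limsup (fun x => (f x : EReal)) (map τ l') := limsup_comp _ _ _
    _ ≤ limsup (fun x => (f x : EReal)) l := limsup_le_limsup_of_le hτ

theorem add_one_mul_exp_half_le (τ : ℝ) : (τ + 1) * exp (τ / 2) ≤ 2 * exp τ := by
  have h := add_one_le_exp (τ / 2)
  have hsq : exp (τ / 2) * exp (τ / 2) = exp τ := by rw [← exp_add, add_halves]
  nlinarith [exp_pos (τ / 2)]

theorem setLIntegral_Ico_le_of_le_off_ends {f : ℝ → ℝ≥0∞} {a b δ : ℝ} {A B : ℝ≥0∞}
    (hδ : 0 ≤ δ) (hA : ∀ x ∈ Ico a b, f x ≤ A) (hB : ∀ x ∈ Icc (a + δ) (b - δ), f x ≤ B) :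
    ∫⁻ x in Ico a b, f x ≤ 2 * ENNReal.ofReal δ * A + ENNReal.ofReal (b - a) * B := by
  have hcover : Ico a b ⊆ (Ico a (a + δ) ∩ Ico a b ∪ Ico (b - δ) b ∩ Ico a b) ∪
      Icc (a + δ) (b - δ) := by
    intro x hx
    by_cases h₁ : x < a + δ
    · exact Or.inl (Or.inl ⟨⟨hx.1, h₁⟩, hx⟩)
    by_cases h₂ : b - δ ≤ x
    · exact Or.inl (Or.inr ⟨⟨h₂, hx.2⟩, hx⟩)
    exact Or.inr ⟨not_lt.1 h₁, (not_le.1 h₂).le⟩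
  have hend : ∀ c, ∫⁻ x in Ico c (c + δ) ∩ Ico a b, f x ≤ ENNReal.ofReal δ * A := fun c =>
    calc ∫⁻ x in Ico c (c + δ) ∩ Ico a b, f x ≤ ∫⁻ _ in Ico c (c + δ) ∩ Ico a b, A :=
          setLIntegral_mono' (measurableSet_Ico.inter measurableSet_Ico) fun x hx => hA x hx.2
      _ = A * volume (Ico c (c + δ) ∩ Ico a b) := setLIntegral_const _ _
      _ ≤ A * volume (Ico c (c + δ)) := by gcongr; exact inter_subset_left
      _ = ENNReal.ofReal δ * A := by rw [Real.volume_Ico, add_sub_cancel_left, mul_comm]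
  have hmid : ∫⁻ x in Icc (a + δ) (b - δ), f x ≤ ENNReal.ofReal (b - a) * B :=
    calc ∫⁻ x in Icc (a + δ) (b - δ), f x ≤ ∫⁻ _ in Icc (a + δ) (b - δ), B :=
          setLIntegral_mono' measurableSet_Icc hB
      _ = B * volume (Icc (a + δ) (b - δ)) := setLIntegral_const _ _
      _ ≤ B * volume (Icc a b) := by gcongr <;> linarith
      _ = ENNReal.ofReal (b - a) * B := by rw [Real.volume_Icc, mul_comm]
  calc ∫⁻ x in Ico a b, f x
      ≤ ∫⁻ x in (Ico a (a + δ) ∩ Ico a b ∪ Ico (b - δ) b ∩ Ico a b) ∪ Icc (a + δ) (b - δ), f x :=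
        lintegral_mono_set hcover
    _ ≤ (∫⁻ x in Ico a (a + δ) ∩ Ico a b, f x) + (∫⁻ x in Ico (b - δ) b ∩ Ico a b, f x)
        + ∫⁻ x in Icc (a + δ) (b - δ), f x :=
        (lintegral_union_le _ _ _).trans (by gcongr; exact lintegral_union_le _ _ _)
    _ ≤ ENNReal.ofReal δ * A + ENNReal.ofReal δ * A + ENNReal.ofReal (b - a) * B := by
        gcongr
        · exact hend a
        · simpa only [sub_add_cancel] using hend (b - δ)
    _ = 2 * ENNReal.ofReal δ * A + ENNReal.ofReal (b - a) * B := by ring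

theorem integrableOn_Ici_of_lintegral_Ico_le {f : ℝ → ℝ}
    (hf : AEStronglyMeasurable f (volume.restrict (Ici 0))) {u : ℕ → ℝ} (hu : Summable u)
    (hbound : ∀ n : ℕ, ∫⁻ x in Ico (n : ℝ) (n + 1), ‖f x‖ₑ ≤ ENNReal.ofReal (u n)) :
    IntegrableOn f (Ici 0) := by
  refine ⟨hf, ?_⟩
  have hcover : Ici (0 : ℝ) ⊆ ⋃ n : ℕ, Ico (n : ℝ) (n + 1) := fun x hx =>
    mem_iUnion.2 ⟨⌊x⌋₊, Nat.floor_le hx, Nat.lt_floor_add_one x⟩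
  calc ∫⁻ x in Ici 0, ‖f x‖ₑ ≤ ∫⁻ x in ⋃ n : ℕ, Ico (n : ℝ) (n + 1), ‖f x‖ₑ :=
        lintegral_mono_set hcover
    _ ≤ ∑' n : ℕ, ∫⁻ x in Ico (n : ℝ) (n + 1), ‖f x‖ₑ := lintegral_iUnion_le _ _
    _ ≤ ∑' n : ℕ, ENNReal.ofReal (u n) := ENNReal.tsum_le_tsum hbound
    _ < ⊤ := (ENNReal.tsum_coe_ne_top_iff_summable.2 hu.toNNReal).lt_top

noncomputable def oscillatingProfile (M τ : ℝ) : ℝ :=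
  M / (τ + 1) + M / 8 * (sin (π * τ) ^ 2 * exp (τ / 2))

namespace oscillatingProfile

variable {M τ : ℝ}

theorem hasDerivAt (hτ : τ + 1 ≠ 0) :
    HasDerivAt (oscillatingProfile M)
      (-(M / (τ + 1) ^ 2) + M / 8 * ((π * sin (2 * (π * τ)) + sin (π * τ) ^ 2 / 2) * exp (τ / 2)))
      τ := by
  have h₁ := (hasDerivAt_const τ M).div ((hasDerivAt_id' τ).add_const 1) hτ
  have h₂ := (((hasDerivAt_id' τ).const_mul π).sin.pow 2).mul ((hasDerivAt_id' τ).div_const 2).exp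
  refine (h₁.add (h₂.const_mul (M / 8))).congr_deriv ?_
  simp only [Pi.pow_apply, sin_two_mul]; field_simp; ring

theorem contDiffOn : ContDiffOn ℝ 1 (oscillatingProfile M) (Ici 0) := by
  unfold oscillatingProfile
  fun_prop (disch := exact fun x (hx : 0 ≤ x) => by positivity)

theorem div_add_one_le (hM : 0 ≤ M) : M / (τ + 1) ≤ oscillatingProfile M τ :=
  le_add_of_nonneg_right (by positivity)

theorem sin_sq_mul_exp_le (hM : 0 ≤ M) (hτ : -1 < τ) :
    M / 8 * (sin (π * τ) ^ 2 * exp (τ / 2)) ≤ oscillatingProfile M τ :=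
  le_add_of_nonneg_left (div_nonneg hM (by linarith [hτ]))

theorem pos (hM : 0 < M) (hτ : -1 < τ) : 0 < oscillatingProfile M τ :=
  (div_pos hM (by linarith)).trans_le (div_add_one_le hM.le)

theorem natCast (M : ℝ) (n : ℕ) : oscillatingProfile M n = M / (n + 1) := by
  simp [oscillatingProfile, mul_comm π, sin_nat_mul_pi]

theorem derivWithin_Ici_le_mul_exp (hM : 0 ≤ M) (hτ : 0 ≤ τ) :
    derivWithin (oscillatingProfile M) (Ici 0) τ ≤ oscillatingProfile M τ * exp τ := by
  rw [(hasDerivAt (by linarith)).hasDerivWithinAt.derivWithin (uniqueDiffOn_Ici 0 τ hτ)]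
  have hfactor : π * sin (2 * (π * τ)) + sin (π * τ) ^ 2 / 2 ≤ 4 := by
    nlinarith [sin_le_one (2 * (π * τ)), sin_sq_le_one (π * τ), pi_lt_d2, pi_pos]
  calc -(M / (τ + 1) ^ 2) + M / 8 * ((π * sin (2 * (π * τ)) + sin (π * τ) ^ 2 / 2) * exp (τ / 2))
      ≤ M / 8 * (4 * exp (τ / 2)) := by
        have := mul_le_mul_of_nonneg_left (mul_le_mul_of_nonneg_right hfactor (exp_pos (τ / 2)).le)
          (by positivity : 0 ≤ M / 8)
        linarith [(by positivity : 0 ≤ M / (τ + 1) ^ 2)]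
    _ = M / (τ + 1) * ((τ + 1) * exp (τ / 2) / 2) := by field_simp; ring
    _ ≤ M / (τ + 1) * exp τ := by
        gcongr; linarith [add_one_mul_exp_half_le τ]
    _ ≤ oscillatingProfile M τ * exp τ := by
        gcongr; exact div_add_one_le hM

theorem tendsto_atTop_two_mul_add_half (hM : 0 < M) :
    Tendsto (fun n : ℕ => oscillatingProfile M (2 * n + 1 / 2)) atTop atTop := by
  refine tendsto_atTop_mono (fun n => ?_)
    (tendsto_natCast_atTop_atTop.const_mul_atTop (by positivity : 0 < M / 8))
  have hsin : sin (π * (2 * n + 1 / 2)) = 1 := by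
    rw [show π * (2 * n + 1 / 2) = π / 2 + n * (2 * π) by ring, sin_add_nat_mul_two_pi,
      sin_pi_div_two]
  calc M / 8 * n ≤ M / 8 * exp ((2 * n + 1 / 2) / 2) := by
        gcongr; linarith [add_one_le_exp ((2 * n + 1 / 2 : ℝ) / 2)]
    _ ≤ oscillatingProfile M (2 * n + 1 / 2) := by
        have h := sin_sq_mul_exp_le hM.le (τ := 2 * n + 1 / 2)
          (by linarith [n.cast_nonneg (α := ℝ)])
        rwa [hsin, one_pow, one_mul] at h

theorem limsup_eq_top (hM : 0 < M) :
    limsup (fun τ => (oscillatingProfile M τ : EReal)) atTop = ⊤ :=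
  limsup_coe_eq_top_of_tendsto_comp_s5
    (tendsto_atTop_add_const_right _ _ (tendsto_natCast_atTop_atTop.const_mul_atTop two_pos))
    (tendsto_atTop_two_mul_add_half hM)

theorem one_div_le_of_mem_Ico (hM : 0 < M) {n : ℕ} (hτ : τ ∈ Ico (n : ℝ) (n + 1)) :
    1 / oscillatingProfile M τ ≤ (n + 2) / M := by
  have hτ₀ : 0 ≤ τ := n.cast_nonneg.trans hτ.1
  rw [div_le_div_iff₀ (pos hM (by linarith)) hM, one_mul]
  calc M = M / (τ + 1) * (τ + 1) := by field_simp
    _ ≤ oscillatingProfile M τ * (n + 2) :=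
        mul_le_mul (div_add_one_le hM.le) (by linarith [hτ.2]) (by linarith)
          (pos hM (by linarith)).le
    _ = (n + 2) * oscillatingProfile M τ := mul_comm _ _

theorem one_div_le_of_mem_Icc (hM : 0 < M) {n : ℕ}
    (hτ : τ ∈ Icc (n + exp (-n / 8)) (n + 1 - exp (-n / 8))) :
    1 / oscillatingProfile M τ ≤ 2 * exp (-n / 4) / M := by
  have hτ₀ : (n : ℝ) ≤ τ := by linarith [hτ.1, exp_pos (-n / 8)]
  have hsin := sq_two_mul_le_sin_sq_pi_mul (exp_pos _).le hτ
  have hexp : exp (-n / 8) ^ 2 * exp (n / 2) = exp (n / 4) := by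
    rw [← exp_nat_mul, ← exp_add]; ring_nf
  have hlow : M / 2 * exp (n / 4) ≤ oscillatingProfile M τ := calc
    M / 2 * exp (n / 4) = M / 8 * ((2 * exp (-n / 8)) ^ 2 * exp (n / 2)) := by
        rw [mul_pow, mul_assoc, hexp]; ring
    _ ≤ M / 8 * (sin (π * τ) ^ 2 * exp (τ / 2)) := by gcongr
    _ ≤ oscillatingProfile M τ := sin_sq_mul_exp_le hM.le (by linarith [n.cast_nonneg (α := ℝ)])
  calc 1 / oscillatingProfile M τ ≤ 1 / (M / 2 * exp (n / 4)) :=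
        one_div_le_one_div_of_le (by positivity) hlow
    _ = 2 * exp (-n / 4) / M := by
        rw [neg_div, exp_neg]; field_simp

theorem lintegral_Ico_le (hM : 0 < M) (n : ℕ) :
    ∫⁻ τ in Ico (n : ℝ) (n + 1), ‖1 / oscillatingProfile M τ‖ₑ ≤
      ENNReal.ofReal (2 / M * ((n + 2) * exp (-n / 8) + exp (-n / 4))) := by
  have hnorm : ∀ τ, -1 < τ → ‖1 / oscillatingProfile M τ‖ₑ =
      ENNReal.ofReal (1 / oscillatingProfile M τ) := fun τ hτ =>
    Real.enorm_eq_ofReal (one_div_nonneg.2 (pos hM hτ).le)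
  refine (setLIntegral_Ico_le_of_le_off_ends (exp_pos (-n / 8)).le
    (A := ENNReal.ofReal ((n + 2) / M)) (B := ENNReal.ofReal (2 * exp (-n / 4) / M))
    (fun τ hτ => ?_) (fun τ hτ => ?_)).trans_eq ?_
  · rw [hnorm τ (by linarith [hτ.1, n.cast_nonneg (α := ℝ)])]
    exact ENNReal.ofReal_le_ofReal (one_div_le_of_mem_Ico hM hτ)
  · rw [hnorm τ (by linarith [hτ.1, n.cast_nonneg (α := ℝ), exp_pos (-n / 8)])]
    exact ENNReal.ofReal_le_ofReal (one_div_le_of_mem_Icc hM hτ)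
  · rw [add_sub_cancel_left, ENNReal.ofReal_one, one_mul, ← ENNReal.ofReal_ofNat 2,
      ← ENNReal.ofReal_mul zero_le_two, ← ENNReal.ofReal_mul (by positivity),
      ← ENNReal.ofReal_add (by positivity) (by positivity)]
    congr 1
    ring

theorem integrableOn_one_div (hM : 0 < M) :
    IntegrableOn (fun τ => 1 / oscillatingProfile M τ) (Ici 0) := by
  refine integrableOn_Ici_of_lintegral_Ico_le ?_ ?_ (lintegral_Ico_le hM)
  · exact (continuousOn_const.div contDiffOn.continuousOn fun τ (hτ : 0 ≤ τ) =>
      (pos hM (by linarith)).ne').aestronglyMeasurable measurableSet_Ici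
  · have hsummable : ∀ k : ℕ, ∀ r : ℝ, 0 < r → Summable fun n : ℕ => (n : ℝ) ^ k * exp (-n / r) :=
      fun k r hr => by
        simpa [neg_div, div_eq_inv_mul] using summable_pow_mul_exp_neg_nat_mul k (inv_pos.2 hr)
    refine ((((hsummable 1 8 (by norm_num)).add ((hsummable 0 8 (by norm_num)).mul_left 2)).add
      (hsummable 0 4 (by norm_num))).mul_left (2 / M)).congr fun n => ?_
    simp only [pow_one, pow_zero, one_mul]
    ring

end oscillatingProfile

/-- For every `M > 0` there is a `C¹` function `X : [0, ∞) → (0, ∞)` with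
`X 0 = M`, satisfying `X' τ ≤ 1 + X τ * e^τ` for all `τ ≥ 0`,
`X n = M / (n + 1)` for every `n : ℕ`, `limsup_{τ → ∞} X τ = ∞`, and
`∫₀^∞ dτ / X τ < ∞`. -/
theorem oscillating_profile_exists (M : ℝ) (hM : 0 < M) :
    ∃ X : ℝ → ℝ,
      ContDiffOn ℝ 1 X (Set.Ici 0) ∧
      (∀ τ ∈ Set.Ici (0:ℝ), 0 < X τ) ∧
      X 0 = M ∧
      (∀ τ ∈ Set.Ici (0:ℝ),
        derivWithin X (Set.Ici 0) τ ≤ 1 + X τ * Real.exp τ) ∧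
      (∀ n : ℕ, X n = M / (n + 1)) ∧
      Filter.limsup (fun τ => (X τ : EReal)) Filter.atTop = ⊤ ∧
      MeasureTheory.IntegrableOn (fun τ => 1 / X τ) (Set.Ici 0) := by
  refine ⟨oscillatingProfile M, oscillatingProfile.contDiffOn,
    fun τ hτ => oscillatingProfile.pos hM (by linarith [mem_Ici.1 hτ]),
    by simpa using oscillatingProfile.natCast M 0, fun τ hτ => ?_, oscillatingProfile.natCast M,
    oscillatingProfile.limsup_eq_top hM, oscillatingProfile.integrableOn_one_div hM⟩
  exact (oscillatingProfile.derivWithin_Ici_le_mul_exp hM.le hτ).trans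
    (le_add_of_nonneg_left zero_le_one)
end

section
/- Let Y : [0, ∞) → (0, ∞) be a measurable function such that for every integer n ≥ 0: Y(τ) ≥ e^{τ/2} − e^{n/2} + 1/(n+1) for all τ ∈ [n, n+1 − 2^{−n−1}), and Y(τ) ≥ 1/(n+1) for all τ ∈ [n+1 − 2^{−n−1}, n+1). Then ∫₀^∞ dτ / Y(τ) < ∞. -/
/-! On `[n, n + 1)` the two bounds give `1 / Y ≤ n + 1`. Moreover, by convexity of `exp`,
`Y τ ≥ e^{τ/2} - e^{n/2} ≥ e^{n/2} (τ - n) / 2`, so `1 / Y ≤ 2 e^{-n/4}` once `τ ≥ n + e^{-n/4}`.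
The large bound `n + 1` is therefore only needed on the two end pieces `[n, n + e^{-n/4})` and
`[n + 1 - 2^{-n-1}, n + 1)`, and the integral of `1 / Y` over `[n, n + 1)` is at most
`(n + 1) (e^{-n/4} + 2^{-n-1}) + 2 e^{-n/4}`, which is summable in `n`. -/

open Set MeasureTheory Real
open scoped ENNReal

lemma setLIntegral_le_mul_diff_add_mul {α : Type*} [MeasurableSpace α] {μ : Measure α}
    {f : α → ℝ≥0∞} {s t : Set α} {M m : ℝ≥0∞}
    (hM : ∀ x ∈ s, f x ≤ M) (hm : ∀ x ∈ s ∩ t, f x ≤ m) :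
    ∫⁻ x in s, f x ∂μ ≤ M * μ (s \ t) + m * μ s :=
  calc ∫⁻ x in s, f x ∂μ = ∫⁻ x in (s \ t) ∪ (s ∩ t), f x ∂μ := by rw [sdiff_union_inter]
    _ ≤ ∫⁻ x in s \ t, f x ∂μ + ∫⁻ x in s ∩ t, f x ∂μ := lintegral_union_le _ _ _
    _ ≤ ∫⁻ _ in s \ t, M ∂μ + ∫⁻ _ in s ∩ t, m ∂μ := by
        gcongr ?_ + ?_
        · exact setLIntegral_mono measurable_const fun x hx => hM x hx.1
        · exact setLIntegral_mono measurable_const hm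
    _ ≤ M * μ (s \ t) + m * μ s := by
        rw [setLIntegral_const, setLIntegral_const]
        gcongr
        exact inter_subset_left

lemma volume_Ico_diff_Ico_le (a b : ℝ) {δ ε : ℝ} (hδ : 0 ≤ δ) (hε : 0 ≤ ε) :
    volume (Ico a b \ Ico (a + δ) (b - ε)) ≤ ENNReal.ofReal (δ + ε) :=
  calc volume (Ico a b \ Ico (a + δ) (b - ε))
      ≤ volume (Ico a (a + δ) ∪ Ico (b - ε) b) := by
        refine measure_mono fun x ⟨⟨hax, hxb⟩, hx⟩ => ?_
        rw [mem_Ico, not_and_or, not_le, not_lt] at hx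
        rcases hx with h | h
        · exact Or.inl ⟨hax, h⟩
        · exact Or.inr ⟨h, hxb⟩
    _ ≤ volume (Ico a (a + δ)) + volume (Ico (b - ε) b) := measure_union_le _ _
    _ = ENNReal.ofReal (δ + ε) := by
        rw [Real.volume_Ico, Real.volume_Ico, add_sub_cancel_left, sub_sub_cancel,
          ENNReal.ofReal_add hδ hε]

lemma Real.exp_mul_sub_le_exp_sub_exp (x y : ℝ) : exp x * (y - x) ≤ exp y - exp x := by
  have hsplit : exp y = exp x * exp (y - x) := by rw [← exp_add, add_sub_cancel]
  nlinarith [add_one_le_exp (y - x), exp_pos x]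

lemma enorm_one_div_le_ofReal {y c : ℝ} (hc : 0 < c) (h : c⁻¹ ≤ y) :
    ‖1 / y‖ₑ ≤ ENNReal.ofReal c := by
  have hy : 0 < y := (inv_pos.2 hc).trans_le h
  rw [← ofReal_norm, one_div, norm_inv, Real.norm_of_nonneg hy.le]
  exact ENNReal.ofReal_le_ofReal (inv_le_of_inv_le₀ hc h)

lemma summable_natCast_add_mul_geometric {r : ℝ} (c : ℝ) (hr : ‖r‖ < 1) :
    Summable fun n : ℕ => ((n : ℝ) + c) * r ^ n := by
  simpa [add_mul] using (summable_pow_mul_geometric_of_norm_lt_one 1 hr).add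
    ((summable_geometric_of_norm_lt_one hr).mul_left c)

lemma integrableOn_Ici_zero_of_lintegral_Ico_le {E : Type*} [NormedAddCommGroup E] {f : ℝ → E}
    (hf : AEStronglyMeasurable f (volume.restrict (Ici 0))) {u : ℕ → ℝ} (hu : Summable u)
    (h : ∀ n : ℕ, ∫⁻ x in Ico (n : ℝ) (n + 1), ‖f x‖ₑ ≤ ENNReal.ofReal (u n)) :
    IntegrableOn f (Ici 0) := by
  have hcover : Ici (0 : ℝ) ⊆ ⋃ n : ℕ, Ico (n : ℝ) (n + 1) := fun x hx =>
    mem_iUnion.2 ⟨⌊x⌋₊, Nat.floor_le hx, Nat.lt_floor_add_one x⟩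
  refine ⟨hf, ?_⟩
  calc ∫⁻ x in Ici 0, ‖f x‖ₑ ≤ ∫⁻ x in ⋃ n : ℕ, Ico (n : ℝ) (n + 1), ‖f x‖ₑ :=
        lintegral_mono_set hcover
    _ ≤ ∑' n : ℕ, ∫⁻ x in Ico (n : ℝ) (n + 1), ‖f x‖ₑ := lintegral_iUnion_le _ _
    _ ≤ ∑' n : ℕ, ENNReal.ofReal (u n) := ENNReal.tsum_le_tsum h
    _ < ∞ := (ENNReal.tsum_coe_ne_top_iff_summable.2 hu.toNNReal).lt_top

section

variable {Y : ℝ → ℝ} {a b c ε : ℝ}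

lemma const_le_of_exp_sub_exp_add_le
    (h₁ : ∀ τ ∈ Ico a (b - ε), exp (τ / 2) - exp (a / 2) + c ≤ Y τ)
    (h₂ : ∀ τ ∈ Ico (b - ε) b, c ≤ Y τ) : ∀ τ ∈ Ico a b, c ≤ Y τ := by
  intro τ ⟨haτ, hτb⟩
  rcases lt_or_ge τ (b - ε) with hτ | hτ
  · have : exp (a / 2) ≤ exp (τ / 2) := exp_le_exp.2 (by linarith)
    linarith [h₁ τ ⟨haτ, hτ⟩]
  · exact h₂ τ ⟨hτ, hτb⟩

lemma exp_mul_const_le_of_exp_sub_exp_add_le {δ : ℝ} (hc : 0 ≤ c)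
    (h₁ : ∀ τ ∈ Ico a (b - ε), exp (τ / 2) - exp (a / 2) + c ≤ Y τ) (hδ : 0 ≤ δ) :
    ∀ τ ∈ Ico (a + δ) (b - ε), exp (a / 2) * δ / 2 ≤ Y τ := by
  intro τ ⟨haτ, hτb⟩
  have hconv := exp_mul_sub_le_exp_sub_exp (a / 2) (τ / 2)
  have : exp (a / 2) * δ ≤ exp (a / 2) * (τ - a) := by gcongr; linarith
  linarith [h₁ τ ⟨by linarith, hτb⟩]

end

lemma lintegral_Ico_enorm_one_div_le {Y : ℝ → ℝ} (n : ℕ)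
    (h₁ : ∀ τ ∈ Ico (n : ℝ) (n + 1 - ((2 : ℝ) ^ (n + 1))⁻¹),
      exp (τ / 2) - exp (n / 2) + 1 / (n + 1) ≤ Y τ)
    (h₂ : ∀ τ ∈ Ico ((n : ℝ) + 1 - ((2 : ℝ) ^ (n + 1))⁻¹) (n + 1), 1 / (n + 1) ≤ Y τ) :
    ∫⁻ τ in Ico (n : ℝ) (n + 1), ‖1 / Y τ‖ₑ ≤
      ENNReal.ofReal ((n + 1) * (exp (-n / 4) + ((2 : ℝ) ^ (n + 1))⁻¹) + 2 * exp (-n / 4)) := by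
  set δ := exp (-n / 4)
  set ε : ℝ := ((2 : ℝ) ^ (n + 1))⁻¹
  have hδ : 0 < δ := exp_pos _
  have hlow := const_le_of_exp_sub_exp_add_le h₁ h₂
  have hmid := exp_mul_const_le_of_exp_sub_exp_add_le (by positivity) h₁ hδ.le
  have hmid_eq : exp (n / 2) * δ / 2 = (2 * δ)⁻¹ := by
    rw [mul_inv, ← exp_neg, ← exp_add]
    ring_nf
  calc ∫⁻ τ in Ico (n : ℝ) (n + 1), ‖1 / Y τ‖ₑ
      ≤ ENNReal.ofReal (n + 1) * volume (Ico (n : ℝ) (n + 1) \ Ico (n + δ) (n + 1 - ε))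
        + ENNReal.ofReal (2 * δ) * volume (Ico (n : ℝ) (n + 1)) := by
        refine setLIntegral_le_mul_diff_add_mul (fun τ hτ => ?_) (fun τ hτ => ?_)
        · exact enorm_one_div_le_ofReal (by positivity) (by simpa using hlow τ hτ)
        · exact enorm_one_div_le_ofReal (by positivity) (hmid_eq ▸ hmid τ hτ.2)
    _ ≤ ENNReal.ofReal (n + 1) * ENNReal.ofReal (δ + ε)
        + ENNReal.ofReal (2 * δ) * ENNReal.ofReal 1 := by
        gcongr
        · exact volume_Ico_diff_Ico_le _ _ hδ.le (by positivity)
        · simp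
    _ = _ := by
        rw [← ENNReal.ofReal_mul (by positivity), ← ENNReal.ofReal_mul (by positivity),
          ← ENNReal.ofReal_add (by positivity) (by positivity), mul_one]

lemma summable_add_one_mul_exp_add_inv_two_pow :
    Summable fun n : ℕ =>
      ((n : ℝ) + 1) * (exp (-n / 4) + ((2 : ℝ) ^ (n + 1))⁻¹) + 2 * exp (-n / 4) := by
  have hexp : ∀ n : ℕ, exp (-n / 4) = exp (-1 / 4) ^ n := fun n => by
    rw [← exp_nat_mul]; ring_nf
  have hr : ‖exp (-1 / 4)‖ < 1 := by
    rw [norm_of_nonneg (exp_pos _).le, exp_lt_one_iff]; norm_num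
  have hhalf : ‖(2 : ℝ)⁻¹‖ < 1 := by norm_num
  refine ((summable_natCast_add_mul_geometric 3 hr).add
    ((summable_natCast_add_mul_geometric 1 hhalf).mul_left 2⁻¹)).congr fun n => ?_
  rw [hexp, ← inv_pow, pow_succ]
  ring

theorem reciprocal_integrable_general (Y : ℝ → ℝ)
    (hmeas : Measurable Y)
    (hbound1 : ∀ n : ℕ, ∀ τ ∈ Set.Ico (n : ℝ) ((n : ℝ) + 1 - ((2:ℝ) ^ (n + 1))⁻¹),
      Real.exp (τ / 2) - Real.exp ((n : ℝ) / 2) + 1 / ((n : ℝ) + 1) ≤ Y τ)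
    (hbound2 : ∀ n : ℕ,
      ∀ τ ∈ Set.Ico ((n : ℝ) + 1 - ((2:ℝ) ^ (n + 1))⁻¹) ((n : ℝ) + 1),
      1 / ((n : ℝ) + 1) ≤ Y τ) :
    MeasureTheory.IntegrableOn (fun τ => 1 / Y τ) (Set.Ici 0) :=
  integrableOn_Ici_zero_of_lintegral_Ico_le (hmeas.const_div 1).aestronglyMeasurable
    summable_add_one_mul_exp_add_inv_two_pow
    fun n => lintegral_Ico_enorm_one_div_le n (hbound1 n) (hbound2 n)

/-- If `Y : [0, ∞) → (0, ∞)` is measurable and, for each `n : ℕ`, satisfies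
`Y τ ≥ e^{τ/2} - e^{n/2} + 1/(n+1)` on `[n, n+1 - 2^{-n-1})` and
`Y τ ≥ 1/(n+1)` on `[n+1 - 2^{-n-1}, n+1)`, then `∫₀^∞ dτ / Y τ < ∞`. -/
theorem reciprocal_integrable (Y : ℝ → ℝ)
    (hmeas : Measurable Y)
    (hpos : ∀ τ ∈ Set.Ici (0:ℝ), 0 < Y τ)
    (hbound1 : ∀ n : ℕ, ∀ τ ∈ Set.Ico (n : ℝ) ((n : ℝ) + 1 - ((2:ℝ) ^ (n + 1))⁻¹),
      Real.exp (τ / 2) - Real.exp ((n : ℝ) / 2) + 1 / ((n : ℝ) + 1) ≤ Y τ)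
    (hbound2 : ∀ n : ℕ,
      ∀ τ ∈ Set.Ico ((n : ℝ) + 1 - ((2:ℝ) ^ (n + 1))⁻¹) ((n : ℝ) + 1),
      1 / ((n : ℝ) + 1) ≤ Y τ) :
    MeasureTheory.IntegrableOn (fun τ => 1 / Y τ) (Set.Ici 0) :=
  reciprocal_integrable_general Y hmeas hbound1 hbound2
end

section
/- Let α > 0, A > 0, B ≥ 0, T* > 0, and let f : [0, T*) → [0, ∞) be differentiable with f'(t) ≤ A·(B + f(t))^{1+α} for all t ∈ [0, T*). If limsup_{t → T*⁻} f(t) = ∞, then for every t ∈ [0, T*) one has B + f(t) ≥ (α·A·(T* − t))^{−1/α}, i.e., f(t) ≥ (α·A·(T* − t))^{−1/α} − B. -/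
/-!
For a positive `u` with `u' ≤ A u^(1+α)`, the quantity `u^(-α) + α A s` is nondecreasing, since its
derivative is `α (A - u^(-α-1) u') ≥ 0`. Comparing its value at `t` with its value at times `s → T*`
where `u` is huge (so `u(s)^(-α)` is tiny) gives `u(t)^(-α) ≤ α A (T* - t)`. Applied to
`u = B + f + ε`, which stays positive even where `B + f` vanishes, and letting `ε → 0`, this is the
claimed bound.
-/

open Set Filter Real Topology

theorem frequently_lt_of_limsup_coe_eq_top {ι : Type*} {l : Filter ι} {u : ι → ℝ}
    (h : limsup (fun i => (u i : EReal)) l = ⊤) (M : ℝ) : ∃ᶠ i in l, M < u i :=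
  (frequently_lt_of_lt_limsup isCobounded_le_of_bot (h ▸ EReal.coe_lt_top M)).mono
    fun _ hi => EReal.coe_lt_coe_iff.1 hi

theorem monotoneOn_rpow_neg_add_mul_of_deriv_le {D : Set ℝ} (hD : Convex ℝ D)
    {u u' : ℝ → ℝ} {α A : ℝ} (hα : 0 ≤ α) (hpos : ∀ s ∈ D, 0 < u s)
    (hu : ∀ s ∈ D, HasDerivWithinAt u (u' s) D s)
    (hle : ∀ s ∈ D, u' s ≤ A * u s ^ (1 + α)) :
    MonotoneOn (fun s => u s ^ (-α) + α * A * s) D := by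
  have hderiv : ∀ s ∈ D, HasDerivWithinAt (fun s => u s ^ (-α) + α * A * s)
      (u' s * (-α) * u s ^ (-α - 1) + α * A) D s := fun s hs =>
    ((hu s hs).rpow_const (Or.inl (hpos s hs).ne')).add
      (by simpa using (hasDerivWithinAt_id s D).const_mul (α * A))
  refine monotoneOn_of_hasDerivWithinAt_nonneg hD (fun s hs => (hderiv s hs).continuousWithinAt)
    (fun s hs => (hderiv s (interior_subset hs)).mono interior_subset) fun s hs => ?_
  replace hs := interior_subset hs
  have hcancel : u s ^ (-α - 1) * u s ^ (1 + α) = 1 := by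
    rw [← rpow_add (hpos s hs), show -α - 1 + (1 + α) = 0 by ring, rpow_zero]
  have hscaled : u s ^ (-α - 1) * u' s ≤ A := by
    calc u s ^ (-α - 1) * u' s ≤ u s ^ (-α - 1) * (A * u s ^ (1 + α)) :=
          mul_le_mul_of_nonneg_left (hle s hs) (rpow_nonneg (hpos s hs).le _)
      _ = A := by rw [mul_left_comm, hcancel, mul_one]
  nlinarith [mul_le_mul_of_nonneg_left hscaled hα]

theorem le_mul_sub_of_monotoneOn_add_mul {g : ℝ → ℝ} {c t T : ℝ} (hc : 0 ≤ c) (ht : t < T)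
    (hmono : MonotoneOn (fun s => g s + c * s) (Ico t T))
    (hsmall : ∀ δ > 0, ∃ᶠ s in 𝓝[<] T, g s ≤ δ) :
    g t ≤ c * (T - t) := by
  refine le_of_forall_pos_le_add fun δ hδ => ?_
  obtain ⟨s, hgs, hts, hsT⟩ := ((hsmall δ hδ).and_eventually (Ioo_mem_nhdsLT ht)).exists
  have := hmono (left_mem_Ico.2 ht) ⟨hts.le, hsT⟩ hts.le
  dsimp only at this
  nlinarith [mul_le_mul_of_nonneg_left hsT.le hc]

theorem frequently_rpow_neg_le_of_frequently_lt {ι : Type*} {l : Filter ι} {u : ι → ℝ} {α : ℝ}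
    (hα : 0 < α) (hlarge : ∀ M : ℝ, ∃ᶠ i in l, M < u i) :
    ∀ δ > 0, ∃ᶠ i in l, u i ^ (-α) ≤ δ := fun δ hδ =>
  (hlarge (δ ^ (-α)⁻¹)).mono fun i hi => by
    have hM : 0 < δ ^ (-α)⁻¹ := rpow_pos_of_pos hδ _
    exact (rpow_inv_le_iff_of_neg hδ (hM.trans hi) (neg_neg_of_pos hα)).1 hi.le

theorem riccati_blowup_lower_bound_general (α A B T : ℝ)
    (hα : 0 < α) (hA : 0 < A) (hB : 0 ≤ B)
    (f f' : ℝ → ℝ)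
    (hf_nonneg : ∀ t ∈ Set.Ico (0:ℝ) T, 0 ≤ f t)
    (hderiv : ∀ t ∈ Set.Ico (0:ℝ) T, HasDerivWithinAt f (f' t) (Set.Ico 0 T) t)
    (hineq : ∀ t ∈ Set.Ico (0:ℝ) T, f' t ≤ A * (B + f t) ^ (1 + α))
    (hblow : Filter.limsup (fun t => (f t : EReal)) (nhdsWithin T (Set.Iio T)) = ⊤) :
    ∀ t ∈ Set.Ico (0:ℝ) T,
      (α * A * (T - t)) ^ (-(1 / α)) ≤ B + f t ∧
      (α * A * (T - t)) ^ (-(1 / α)) - B ≤ f t := by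
  intro t ht
  have hK : 0 < α * A * (T - t) := by have := sub_pos.2 ht.2; positivity
  have hshift : ∀ ε > 0, (α * A * (T - t)) ^ (-(1 / α)) ≤ B + f t + ε := by
    intro ε hε
    have hpos : ∀ s ∈ Ico 0 T, 0 < B + f s + ε := fun s hs => by linarith [hf_nonneg s hs]
    have hmono := monotoneOn_rpow_neg_add_mul_of_deriv_le (u := fun s => B + f s + ε)
      (convex_Ico 0 T) hα.le hpos (fun s hs => ((hderiv s hs).const_add B).add_const ε)
      fun s hs => (hineq s hs).trans <| mul_le_mul_of_nonneg_left
        (rpow_le_rpow (by linarith [hf_nonneg s hs]) (by linarith) (by linarith)) hA.le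
    have hsmall := frequently_rpow_neg_le_of_frequently_lt (u := fun s => B + f s + ε) hα fun M =>
      (frequently_lt_of_limsup_coe_eq_top hblow (M - B - ε)).mono fun s hs => by linarith
    have hbound := le_mul_sub_of_monotoneOn_add_mul (by positivity) ht.2
      (hmono.mono (Ico_subset_Ico_left ht.1)) hsmall
    rw [show -(1 / α) = (-α)⁻¹ by rw [one_div, neg_inv]]
    exact (rpow_inv_le_iff_of_neg hK (hpos t ht) (neg_neg_of_pos hα)).2 hbound
  have hlower := le_of_forall_pos_le_add hshift
  exact ⟨hlower, by linarith⟩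

/-- Riccati-type comparison lemma: if `f : [0, T*) → [0, ∞)` is differentiable
with `f' t ≤ A * (B + f t)^(1+α)` and `limsup_{t → T*⁻} f t = ∞`, then for all
`t ∈ [0, T*)` one has `B + f t ≥ (α A (T* - t))^{-1/α}`, i.e.
`f t ≥ (α A (T* - t))^{-1/α} - B`. -/
theorem riccati_blowup_lower_bound (α A B T : ℝ)
    (hα : 0 < α) (hA : 0 < A) (hB : 0 ≤ B) (hT : 0 < T)
    (f f' : ℝ → ℝ)
    (hf_nonneg : ∀ t ∈ Set.Ico (0:ℝ) T, 0 ≤ f t)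
    (hderiv : ∀ t ∈ Set.Ico (0:ℝ) T, HasDerivWithinAt f (f' t) (Set.Ico 0 T) t)
    (hineq : ∀ t ∈ Set.Ico (0:ℝ) T, f' t ≤ A * (B + f t) ^ (1 + α))
    (hblow : Filter.limsup (fun t => (f t : EReal)) (nhdsWithin T (Set.Iio T)) = ⊤) :
    ∀ t ∈ Set.Ico (0:ℝ) T,
      (α * A * (T - t)) ^ (-(1 / α)) ≤ B + f t ∧
      (α * A * (T - t)) ^ (-(1 / α)) - B ≤ f t :=
  riccati_blowup_lower_bound_general α A B T hα hA hB f f' hf_nonneg hderiv hineq hblow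
end
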